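/- arXiv:1906.10079 — 8 statements merged into one kernel-verified Lean document; each statement's English description precedes it below -/
import Mathlib

section
/- Let g : [0,1) → ℝ be defined by g(y) = 1 − 8/((√((9−y)/(1−y)) + 2)² − 1). Then for every y ∈ [0,1), √((9 − g(y))/(1 − g(y))) = √((9 − y)/(1 − y)) + 2. In other words, the change of variables s(y) = √((9−y)/(1−y)) conjugates g to the translation s ↦ s + 2. -/
theorem nine_sub_div_one_sub_one_sub_eight_div {t : ℝ} (ht : t ^ 2 ≠ 1) :
    (9 - (1 - 8 / (t ^ 2 - 1))) / (1 - (1 - 8 / (t ^ 2 - 1))) = t ^ 2 := by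
  have hden : t ^ 2 - 1 ≠ 0 := sub_ne_zero.mpr ht
  field_simp
  ring

/-- The change of variables `s(y) = √((9−y)/(1−y))` conjugates `g` to `s ↦ s + 2`. -/
theorem sqrt_ratio_g_eq_add_two (g : ℝ → ℝ)
    (hg : ∀ y ∈ Set.Ico (0 : ℝ) 1,
      g y = 1 - 8 / ((Real.sqrt ((9 - y) / (1 - y)) + 2) ^ 2 - 1)) :
    ∀ y ∈ Set.Ico (0 : ℝ) 1,
      Real.sqrt ((9 - g y) / (1 - g y)) = Real.sqrt ((9 - y) / (1 - y)) + 2 := by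
  intro y hy
  have hs : 0 ≤ Real.sqrt ((9 - y) / (1 - y)) := Real.sqrt_nonneg _
  have ht : (Real.sqrt ((9 - y) / (1 - y)) + 2) ^ 2 ≠ 1 := by nlinarith
  rw [hg y hy, nine_sub_div_one_sub_one_sub_eight_div ht, Real.sqrt_sq (by linarith)]
end

section
/- Let g : [0,1) → ℝ be defined by g(y) = 1 − 8/((√((9−y)/(1−y)) + 2)² − 1). Then g maps [0,1) into [0,1), and for every integer p ≥ 0 and every y ∈ [0,1), the p-th iterate of g satisfies g^[p](y) = 1 − 8/((√((9−y)/(1−y)) + 2p)² − 1). -/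
/-!
The coordinate `t = √((9 - y)/(1 - y))` maps `[0,1)` bijectively onto `[3,∞)`, with inverse
`t ↦ 1 - 8/(t² - 1)`, and in this coordinate `g` is the translation `t ↦ t + 2`. Iterating a
conjugate of a translation by `2` gives the conjugate of the translation by `2p`.
-/

open Set

section Conjugacy

variable {α M : Type*} [AddMonoid M] {S : Set α} {T : Set M} {φ : α → M} {ψ : M → α}
  {g : α → α} {c : M}

theorem mapsTo_of_eq_conj_add (hφ : MapsTo φ S T) (hψ : MapsTo ψ T S)
    (hT : ∀ t ∈ T, t + c ∈ T) (hg : ∀ y ∈ S, g y = ψ (φ y + c)) : MapsTo g S S :=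
  fun y hy => hg y hy ▸ hψ (hT _ (hφ hy))

theorem iterate_eq_of_eq_conj_add (hφ : MapsTo φ S T) (hψ : MapsTo ψ T S)
    (hψφ : LeftInvOn ψ φ S) (hφψ : LeftInvOn φ ψ T) (hT : ∀ t ∈ T, t + c ∈ T)
    (hg : ∀ y ∈ S, g y = ψ (φ y + c)) (p : ℕ) {y : α} (hy : y ∈ S) :
    g^[p] y = ψ (φ y + p • c) := by
  induction p generalizing y with
  | zero => simpa using (hψφ hy).symm
  | succ p ih =>
    have hφg : φ (g y) = φ y + c := hg y hy ▸ hφψ (hT _ (hφ hy))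
    rw [Function.iterate_succ_apply, ih (mapsTo_of_eq_conj_add hφ hψ hT hg hy), hφg,
      add_assoc, succ_nsmul']

end Conjugacy

noncomputable def linearizingCoord (y : ℝ) : ℝ := √((9 - y) / (1 - y))

noncomputable def linearizingCoordInv (t : ℝ) : ℝ := 1 - 8 / (t ^ 2 - 1)

theorem linearizingCoord_mapsTo : MapsTo linearizingCoord (Ico 0 1) (Ici 3) := by
  rintro y ⟨hy0, hy1⟩
  have h9 : (9 : ℝ) ≤ (9 - y) / (1 - y) := by
    rw [le_div_iff₀ (by linarith)]
    nlinarith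
  calc (3 : ℝ) = √9 := by rw [show (9 : ℝ) = 3 ^ 2 by norm_num, Real.sqrt_sq zero_le_three]
    _ ≤ linearizingCoord y := Real.sqrt_le_sqrt h9

theorem linearizingCoordInv_mapsTo : MapsTo linearizingCoordInv (Ici 3) (Ico 0 1) := by
  intro t (ht : 3 ≤ t)
  have hpos : 0 < t ^ 2 - 1 := by nlinarith
  have hle : 8 / (t ^ 2 - 1) ≤ 1 := by
    rw [div_le_one hpos]
    nlinarith
  have hgt : 0 < 8 / (t ^ 2 - 1) := by positivity
  simp only [linearizingCoordInv, mem_Ico]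
  constructor <;> linarith

theorem linearizingCoordInv_linearizingCoord {y : ℝ} (hy : y < 1) :
    linearizingCoordInv (linearizingCoord y) = y := by
  have h1y : 0 < 1 - y := by linarith
  have hsq : linearizingCoord y ^ 2 = (9 - y) / (1 - y) :=
    Real.sq_sqrt (div_nonneg (by linarith) h1y.le)
  rw [linearizingCoordInv, hsq]
  field_simp
  ring

theorem linearizingCoord_linearizingCoordInv {t : ℝ} (ht : 1 < t) :
    linearizingCoord (linearizingCoordInv t) = t := by
  have hpos : 0 < t ^ 2 - 1 := by nlinarith
  have hratio : (9 - linearizingCoordInv t) / (1 - linearizingCoordInv t) = t ^ 2 := by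
    unfold linearizingCoordInv
    field_simp
    ring
  rw [linearizingCoord, hratio, Real.sqrt_sq (by linarith)]

/-- `g` maps `[0,1)` into `[0,1)` and its `p`-th iterate has the explicit form
`g^[p](y) = 1 − 8/((√((9−y)/(1−y)) + 2p)² − 1)`. -/
theorem g_mapsTo_and_iterate_formula (g : ℝ → ℝ)
    (hg : ∀ y ∈ Set.Ico (0 : ℝ) 1,
      g y = 1 - 8 / ((Real.sqrt ((9 - y) / (1 - y)) + 2) ^ 2 - 1)) :
    Set.MapsTo g (Set.Ico (0 : ℝ) 1) (Set.Ico (0 : ℝ) 1) ∧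
    ∀ p : ℕ, ∀ y ∈ Set.Ico (0 : ℝ) 1,
      g^[p] y = 1 - 8 / ((Real.sqrt ((9 - y) / (1 - y)) + 2 * p) ^ 2 - 1) := by
  have hT : ∀ t ∈ Ici (3 : ℝ), t + 2 ∈ Ici (3 : ℝ) := fun t (ht : 3 ≤ t) =>
    show 3 ≤ t + 2 by linarith
  have hψφ : LeftInvOn linearizingCoordInv linearizingCoord (Ico 0 1) :=
    fun y hy => linearizingCoordInv_linearizingCoord hy.2
  have hφψ : LeftInvOn linearizingCoord linearizingCoordInv (Ici 3) :=
    fun t (ht : 3 ≤ t) => linearizingCoord_linearizingCoordInv (by linarith)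
  refine ⟨mapsTo_of_eq_conj_add linearizingCoord_mapsTo linearizingCoordInv_mapsTo hT hg,
    fun p y hy => ?_⟩
  rw [iterate_eq_of_eq_conj_add linearizingCoord_mapsTo linearizingCoordInv_mapsTo hψφ hφψ hT
    hg p hy, nsmul_eq_mul, mul_comm]
  rfl
end

section
/- Let g : [0,1) → ℝ be defined by g(y) = 1 − 8/((√((9−y)/(1−y)) + 2)² − 1). For every integer r ≥ 0, the quantity π_r := g^[r](0) satisfies π_r = 1 − 8/((3 + 2r)² − 1) = 1 − 2/((r+1)(r+2)). In particular π_0 = 0, π_1 = 2/3, the sequence (π_r) is strictly increasing, and π_r → 1 as r → ∞. -/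
/-- The extinction probabilities `π_r = g^[r](0)` satisfy
`π_r = 1 − 8/((3+2r)² − 1) = 1 − 2/((r+1)(r+2))`; in particular `π_0 = 0`, `π_1 = 2/3`,
`(π_r)` is strictly increasing and `π_r → 1`. -/
theorem pi_r_formula (g : ℝ → ℝ)
    (hg : ∀ y ∈ Set.Ico (0 : ℝ) 1,
      g y = 1 - 8 / ((Real.sqrt ((9 - y) / (1 - y)) + 2) ^ 2 - 1))
    (piR : ℕ → ℝ) (hpi : ∀ r : ℕ, piR r = g^[r] 0) :
    (∀ r : ℕ, piR r = 1 - 8 / ((3 + 2 * (r : ℝ)) ^ 2 - 1)) ∧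
    (∀ r : ℕ, piR r = 1 - 2 / (((r : ℝ) + 1) * ((r : ℝ) + 2))) ∧
    piR 0 = 0 ∧ piR 1 = 2 / 3 ∧ StrictMono piR ∧
    Filter.Tendsto piR Filter.atTop (nhds 1) := by
  -- main induction
  have key : ∀ r : ℕ, g^[r] 0 = 1 - 2 / (((r : ℝ) + 1) * ((r : ℝ) + 2)) := by
    intro r
    induction r with
    | zero => norm_num
    | succ r ih =>
      have hr0 : (0 : ℝ) < (r : ℝ) + 1 := by positivity
      have hr1 : (0 : ℝ) < (r : ℝ) + 2 := by positivity
      have hprod : (0 : ℝ) < ((r : ℝ) + 1) * ((r : ℝ) + 2) := by positivity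
      set y : ℝ := 1 - 2 / (((r : ℝ) + 1) * ((r : ℝ) + 2)) with hy
      have hmem : y ∈ Set.Ico (0 : ℝ) 1 := by
        constructor
        · rw [hy, sub_nonneg, div_le_one hprod]
          nlinarith [Nat.cast_nonneg (α := ℝ) r]
        · rw [hy]
          have : (0 : ℝ) < 2 / (((r : ℝ) + 1) * ((r : ℝ) + 2)) := by positivity
          linarith
      rw [Function.iterate_succ_apply', ih, hg y hmem]
      have hrat : (9 - y) / (1 - y) = (2 * (r : ℝ) + 3) ^ 2 := by
        rw [hy]
        have h1 : (1 : ℝ) - (1 - 2 / (((r : ℝ) + 1) * ((r : ℝ) + 2)))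
            = 2 / (((r : ℝ) + 1) * ((r : ℝ) + 2)) := by ring
        field_simp
        ring
      rw [hrat, Real.sqrt_sq (by positivity)]
      have h24 : ((2 * (r : ℝ) + 3) + 2) ^ 2 - 1 = 4 * (((r : ℝ) + 2) * ((r : ℝ) + 3)) := by
        ring
      rw [h24]
      have hp2 : (0 : ℝ) < ((r : ℝ) + 2) * ((r : ℝ) + 3) := by positivity
      push_cast
      field_simp
      ring
  have key2 : ∀ r : ℕ, piR r = 1 - 2 / (((r : ℝ) + 1) * ((r : ℝ) + 2)) := fun r => by
    rw [hpi, key]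
  have key1 : ∀ r : ℕ, piR r = 1 - 8 / ((3 + 2 * (r : ℝ)) ^ 2 - 1) := by
    intro r
    rw [key2 r]
    have h : ((3 : ℝ) + 2 * (r : ℝ)) ^ 2 - 1 = 4 * ((((r : ℝ) + 1) * ((r : ℝ) + 2))) := by ring
    rw [h]
    have hprod : (0 : ℝ) < ((r : ℝ) + 1) * ((r : ℝ) + 2) := by positivity
    field_simp
    ring
  refine ⟨key1, key2, ?_, ?_, ?_, ?_⟩
  · rw [key2]; norm_num
  · rw [key2]; norm_num
  · apply strictMono_nat_of_lt_succ
    intro r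
    rw [key2 r, key2 (r + 1)]
    have h1 : (0 : ℝ) < ((r : ℝ) + 1) * ((r : ℝ) + 2) := by positivity
    have h2 : ((r : ℝ) + 1) * ((r : ℝ) + 2) < (((r : ℝ) + 1 + 1)) * (((r : ℝ) + 1 + 2)) := by
      nlinarith [Nat.cast_nonneg (α := ℝ) r]
    push_cast
    have := div_lt_div_of_pos_left (by norm_num : (0:ℝ) < 2) h1 h2
    linarith
  · have h1 : Filter.Tendsto (fun r : ℕ => (((r : ℝ) + 1) * ((r : ℝ) + 2))) Filter.atTop
        Filter.atTop := by
      apply Filter.tendsto_atTop_mono (f := fun r : ℕ => (r : ℝ))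
      · intro r
        nlinarith [Nat.cast_nonneg (α := ℝ) r]
      · exact tendsto_natCast_atTop_atTop
    have h2 : Filter.Tendsto (fun r : ℕ => 2 / (((r : ℝ) + 1) * ((r : ℝ) + 2))) Filter.atTop
        (nhds 0) := Filter.Tendsto.div_atTop tendsto_const_nhds h1
    have h3 := (tendsto_const_nhds (x := (1:ℝ)) (f := Filter.atTop (α := ℕ))).sub h2
    simp only [sub_zero] at h3
    have : piR = fun r : ℕ => 1 - 2 / (((r : ℝ) + 1) * ((r : ℝ) + 2)) := funext key2
    rw [this]
    exact h3
end

section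
/- Let g : [0,1) → ℝ be defined by g(y) = 1 − 8/((√((9−y)/(1−y)) + 2)² − 1). There exists a sequence θ : ℕ → ℝ with θ(n) ≥ 0 for every n, ∑_{n=0}^∞ θ(n) = 1, ∑_{n=0}^∞ n·θ(n) = 1, and such that for every y ∈ [0,1), ∑_{n=0}^∞ θ(n)·yⁿ = g(y). In other words, g is the probability generating function of a critical offspring distribution on ℕ. -/
/-!
The distribution is a mixture of geometric laws:
`θ n = 512 / π * ∫₀^∞ w u * r u ^ n du` with `w u = u² / ((1 + u²)² (9 + u²)²)` and
`r u = (1 + u²) / (9 + u²) ∈ [1/9, 1)`. It is nonnegative, and summing under the integral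
sign turns `∑ θ n yⁿ`, `∑ θ n` and `∑ n θ n` into integrals of `w / (1 - y r)`, `w / (1 - r)`
and `w r / (1 - r)²`. These are rational in `u²` and are computed by partial fractions, the
primitives being `arctan (u / a) / a` and its analogue for `(a² + u²)⁻²`. In the variable
`s = √((9 - y) / (1 - y))`, i.e. `y = (s² - 9) / (s² - 1)`, one has
`1 - y r u = 8 (s² + u²) / ((s² - 1) (9 + u²))`, and the integral comes out as
`π / 512 * (1 - 8 / ((s + 2)² - 1))`.
-/

open Real MeasureTheory Set Filter Topology

lemma hasSum_integral_of_nonneg_of_hasSum {α ι : Type*} [MeasurableSpace α] [Countable ι]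
    {μ : Measure α} {F : ι → α → ℝ} {f : α → ℝ}
    (hF_meas : ∀ n, AEStronglyMeasurable (F n) μ) (hF_nonneg : ∀ n, 0 ≤ᵐ[μ] F n)
    (hf : Integrable f μ) (hsum : ∀ᵐ a ∂μ, HasSum (fun n => F n a) (f a)) :
    HasSum (fun n => ∫ a, F n a ∂μ) (∫ a, f a ∂μ) := by
  refine hasSum_integral_of_dominated_convergence F hF_meas (fun n => ?_) ?_ ?_ hsum
  · filter_upwards [hF_nonneg n] with a ha
    rw [Real.norm_eq_abs, abs_of_nonneg ha]
  · filter_upwards [hsum] with a ha using ha.summable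
  · refine hf.congr ?_
    filter_upwards [hsum] with a ha using ha.tsum_eq.symm

lemma integrableOn_Ioi_and_integral_eq_of_hasDerivAt {f F : ℝ → ℝ} {L : ℝ}
    (hF : ∀ x, HasDerivAt F (f x) x) (hf : ∀ x, 0 ≤ f x) (hF0 : F 0 = 0)
    (hlim : Tendsto F atTop (𝓝 L)) :
    IntegrableOn f (Ioi 0) ∧ ∫ x in Ioi 0, f x = L := by
  refine ⟨integrableOn_Ioi_deriv_of_nonneg' (fun x _ => hF x) (fun x _ => hf x) hlim, ?_⟩
  rw [integral_Ioi_of_hasDerivAt_of_nonneg' (fun x _ => hF x) (fun x _ => hf x) hlim, hF0,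
    sub_zero]

noncomputable def primInvSqAdd (a u : ℝ) : ℝ := arctan (u / a) / a

noncomputable def primInvSqAddSq (a u : ℝ) : ℝ :=
  (u / (a ^ 2 + u ^ 2) + primInvSqAdd a u) / (2 * a ^ 2)

lemma hasDerivAt_primInvSqAdd {a : ℝ} (ha : a ≠ 0) (x : ℝ) :
    HasDerivAt (primInvSqAdd a) (1 / (a ^ 2 + x ^ 2)) x := by
  refine (((hasDerivAt_id' x).div_const a).arctan.div_const a).congr_deriv ?_
  field_simp

lemma hasDerivAt_primInvSqAddSq {a : ℝ} (ha : a ≠ 0) (x : ℝ) :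
    HasDerivAt (primInvSqAddSq a) (1 / (a ^ 2 + x ^ 2) ^ 2) x := by
  have hden : a ^ 2 + x ^ 2 ≠ 0 := by positivity
  have hquot : HasDerivAt (fun u => u / (a ^ 2 + u ^ 2))
      ((a ^ 2 - x ^ 2) / (a ^ 2 + x ^ 2) ^ 2) x := by
    refine ((hasDerivAt_id' x).div ((hasDerivAt_pow 2 x).const_add (a ^ 2)) hden).congr_deriv ?_
    field_simp
    ring
  refine ((hquot.add (hasDerivAt_primInvSqAdd ha x)).div_const (2 * a ^ 2)).congr_deriv ?_
  field_simp
  ring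

lemma tendsto_primInvSqAdd_atTop {a : ℝ} (ha : 0 < a) :
    Tendsto (primInvSqAdd a) atTop (𝓝 (π / (2 * a))) := by
  have h := ((tendsto_arctan_atTop.mono_right nhdsWithin_le_nhds).comp
    (tendsto_id.atTop_div_const ha)).div_const a
  rwa [div_div] at h

lemma tendsto_div_sq_add_sq_atTop (a : ℝ) :
    Tendsto (fun u => u / (a ^ 2 + u ^ 2)) atTop (𝓝 0) := by
  refine squeeze_zero' ?_ ?_ tendsto_inv_atTop_zero
  · filter_upwards [eventually_ge_atTop 0] with u hu
    positivity
  · filter_upwards [eventually_gt_atTop 0] with u hu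
    rw [div_le_iff₀ (by positivity)]
    field_simp
    nlinarith [sq_nonneg a]

lemma tendsto_primInvSqAddSq_atTop {a : ℝ} (ha : 0 < a) :
    Tendsto (primInvSqAddSq a) atTop (𝓝 (π / (4 * a ^ 3))) := by
  have h := ((tendsto_div_sq_add_sq_atTop a).add (tendsto_primInvSqAdd_atTop ha)).div_const
    (2 * a ^ 2)
  rwa [zero_add, div_div, show 2 * a * (2 * a ^ 2) = 4 * a ^ 3 by ring] at h

noncomputable def offspringWeight (u : ℝ) : ℝ := u ^ 2 / ((1 + u ^ 2) ^ 2 * (9 + u ^ 2) ^ 2)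

noncomputable def offspringRatio (u : ℝ) : ℝ := (1 + u ^ 2) / (9 + u ^ 2)

lemma offspringWeight_nonneg (u : ℝ) : 0 ≤ offspringWeight u := by
  unfold offspringWeight
  positivity

lemma offspringRatio_nonneg (u : ℝ) : 0 ≤ offspringRatio u := by
  unfold offspringRatio
  positivity

lemma offspringRatio_lt_one (u : ℝ) : offspringRatio u < 1 := by
  rw [offspringRatio, div_lt_one (by positivity)]
  norm_num

lemma one_sub_offspringRatio (u : ℝ) : 1 - offspringRatio u = 8 / (9 + u ^ 2) := by
  unfold offspringRatio
  field_simp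
  ring

lemma one_sub_mul_offspringRatio {s : ℝ} (hs : s ^ 2 ≠ 1) (u : ℝ) :
    1 - (s ^ 2 - 9) / (s ^ 2 - 1) * offspringRatio u
      = 8 * (s ^ 2 + u ^ 2) / ((s ^ 2 - 1) * (9 + u ^ 2)) := by
  have : s ^ 2 - 1 ≠ 0 := sub_ne_zero.2 hs
  unfold offspringRatio
  field_simp
  ring

lemma integral_offspringWeight_div_one_sub_offspringRatio :
    IntegrableOn (fun u => offspringWeight u * (1 - offspringRatio u)⁻¹) (Ioi 0) ∧
      ∫ u in Ioi 0, offspringWeight u * (1 - offspringRatio u)⁻¹ = π / 512 := by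
  refine integrableOn_Ioi_and_integral_eq_of_hasDerivAt
    (F := fun u => 9 / 512 * primInvSqAdd 1 u - 1 / 64 * primInvSqAddSq 1 u
      - 9 / 512 * primInvSqAdd 3 u) (fun x => ?_)
    (fun x => by rw [one_sub_offspringRatio]; unfold offspringWeight; positivity)
    (by simp [primInvSqAdd, primInvSqAddSq]) ?_
  · refine ((((hasDerivAt_primInvSqAdd one_ne_zero x).const_mul _).sub
      ((hasDerivAt_primInvSqAddSq one_ne_zero x).const_mul _)).sub
      ((hasDerivAt_primInvSqAdd three_ne_zero x).const_mul _)).congr_deriv ?_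
    rw [one_sub_offspringRatio, offspringWeight]
    field_simp
    ring
  · convert (((tendsto_primInvSqAdd_atTop one_pos).const_mul (9 / 512)).sub
      ((tendsto_primInvSqAddSq_atTop one_pos).const_mul (1 / 64))).sub
      ((tendsto_primInvSqAdd_atTop three_pos).const_mul (9 / 512)) using 2
    ring

lemma integral_offspringWeight_mul_offspringRatio_div_one_sub_offspringRatio_sq :
    IntegrableOn (fun u => offspringWeight u * (offspringRatio u / (1 - offspringRatio u) ^ 2))
      (Ioi 0) ∧
      ∫ u in Ioi 0, offspringWeight u * (offspringRatio u / (1 - offspringRatio u) ^ 2)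
        = π / 512 := by
  refine integrableOn_Ioi_and_integral_eq_of_hasDerivAt
    (F := fun u => 9 / 512 * primInvSqAdd 3 u - 1 / 512 * primInvSqAdd 1 u) (fun x => ?_)
    (fun x => by
      rw [one_sub_offspringRatio]; unfold offspringWeight offspringRatio; positivity)
    (by simp [primInvSqAdd]) ?_
  · refine (((hasDerivAt_primInvSqAdd three_ne_zero x).const_mul _).sub
      ((hasDerivAt_primInvSqAdd one_ne_zero x).const_mul _)).congr_deriv ?_
    rw [one_sub_offspringRatio, offspringWeight, offspringRatio]
    field_simp
    ring
  · convert ((tendsto_primInvSqAdd_atTop three_pos).const_mul (9 / 512)).sub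
      ((tendsto_primInvSqAdd_atTop one_pos).const_mul (1 / 512)) using 2
    ring

lemma integral_offspringWeight :
    IntegrableOn offspringWeight (Ioi 0) ∧ ∫ u in Ioi 0, offspringWeight u = π / 768 := by
  refine integrableOn_Ioi_and_integral_eq_of_hasDerivAt
    (F := fun u => 5 / 256 * primInvSqAdd 1 u - 1 / 64 * primInvSqAddSq 1 u
      - 5 / 256 * primInvSqAdd 3 u - 9 / 64 * primInvSqAddSq 3 u) (fun x => ?_)
    offspringWeight_nonneg (by simp [primInvSqAdd, primInvSqAddSq]) ?_
  · refine (((((hasDerivAt_primInvSqAdd one_ne_zero x).const_mul _).sub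
      ((hasDerivAt_primInvSqAddSq one_ne_zero x).const_mul _)).sub
      ((hasDerivAt_primInvSqAdd three_ne_zero x).const_mul _)).sub
      ((hasDerivAt_primInvSqAddSq three_ne_zero x).const_mul _)).congr_deriv ?_
    rw [offspringWeight]
    field_simp
    ring
  · convert ((((tendsto_primInvSqAdd_atTop one_pos).const_mul (5 / 256)).sub
      ((tendsto_primInvSqAddSq_atTop one_pos).const_mul (1 / 64))).sub
      ((tendsto_primInvSqAdd_atTop three_pos).const_mul (5 / 256))).sub
      ((tendsto_primInvSqAddSq_atTop three_pos).const_mul (9 / 64)) using 2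
    ring

lemma integral_offspringWeight_div_one_sub_mul_offspringRatio_of_three_lt {s y : ℝ} (hs : 3 < s)
    (hy : y = (s ^ 2 - 9) / (s ^ 2 - 1)) :
    IntegrableOn (fun u => offspringWeight u * (1 - y * offspringRatio u)⁻¹) (Ioi 0) ∧
      ∫ u in Ioi 0, offspringWeight u * (1 - y * offspringRatio u)⁻¹
        = π / 512 * (1 - 8 / ((s + 2) ^ 2 - 1)) := by
  subst hy
  have hs0 : s ≠ 0 := by positivity
  have hs9 : s ^ 2 - 9 ≠ 0 := by nlinarith
  have hsq : s ^ 2 ≠ 1 := by nlinarith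
  -- partial fractions of `v / ((1 + v)² (9 + v) (s² + v))` in `v = u²`; the coefficient of
  -- `1 / (1 + v)` is `-(C + D)` since the function is `O(v⁻³)`
  set B := -1 / (8 * (s ^ 2 - 1))
  set C := -9 / (64 * (s ^ 2 - 9))
  set D := s ^ 2 / ((s ^ 2 - 1) ^ 2 * (s ^ 2 - 9))
  refine integrableOn_Ioi_and_integral_eq_of_hasDerivAt
    (F := fun u => (s ^ 2 - 1) / 8 * (-(C + D) * primInvSqAdd 1 u + B * primInvSqAddSq 1 u
      + C * primInvSqAdd 3 u + D * primInvSqAdd s u)) (fun x => ?_)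
    (fun x => by
      rw [one_sub_mul_offspringRatio hsq, offspringWeight]
      have : 0 < s ^ 2 - 1 := by nlinarith
      positivity)
    (by simp [primInvSqAdd, primInvSqAddSq]) ?_
  · refine (((((hasDerivAt_primInvSqAdd one_ne_zero x).const_mul _).add
      ((hasDerivAt_primInvSqAddSq one_ne_zero x).const_mul _)).add
      ((hasDerivAt_primInvSqAdd three_ne_zero x).const_mul _)).add
      ((hasDerivAt_primInvSqAdd hs0 x).const_mul _)).const_mul _ |>.congr_deriv ?_
    rw [one_sub_mul_offspringRatio hsq, offspringWeight]
    simp only [B, C, D]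
    field_simp
    ring
  · convert (((((tendsto_primInvSqAdd_atTop one_pos).const_mul (-(C + D))).add
      ((tendsto_primInvSqAddSq_atTop one_pos).const_mul B)).add
      ((tendsto_primInvSqAdd_atTop three_pos).const_mul C)).add
      ((tendsto_primInvSqAdd_atTop (by linarith : 0 < s)).const_mul D)).const_mul
      ((s ^ 2 - 1) / 8) using 2
    have : (s + 2) ^ 2 - 1 ≠ 0 := by nlinarith
    simp only [B, C, D]
    field_simp
    ring

lemma integral_offspringWeight_div_one_sub_mul_offspringRatio {s y : ℝ} (hs : 3 ≤ s)
    (hy : y = (s ^ 2 - 9) / (s ^ 2 - 1)) :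
    IntegrableOn (fun u => offspringWeight u * (1 - y * offspringRatio u)⁻¹) (Ioi 0) ∧
      ∫ u in Ioi 0, offspringWeight u * (1 - y * offspringRatio u)⁻¹
        = π / 512 * (1 - 8 / ((s + 2) ^ 2 - 1)) := by
  -- at `s = 3` the factors `9 + u²` and `s² + u²` merge and the partial fractions change
  rcases hs.eq_or_lt with rfl | hs
  · norm_num at hy
    subst hy
    simp only [zero_mul, sub_zero, inv_one, mul_one]
    exact ⟨integral_offspringWeight.1, by rw [integral_offspringWeight.2]; norm_num; ring⟩
  · exact integral_offspringWeight_div_one_sub_mul_offspringRatio_of_three_lt hs hy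

noncomputable def criticalOffspring (n : ℕ) : ℝ :=
  512 / π * ∫ u in Ioi 0, offspringWeight u * offspringRatio u ^ n

lemma criticalOffspring_nonneg (n : ℕ) : 0 ≤ criticalOffspring n := by
  refine mul_nonneg (by positivity) (setIntegral_nonneg measurableSet_Ioi fun u _ => ?_)
  exact mul_nonneg (offspringWeight_nonneg u) (pow_nonneg (offspringRatio_nonneg u) n)

lemma hasSum_mul_criticalOffspring {a : ℕ → ℝ} {A : ℝ → ℝ} (ha : ∀ n, 0 ≤ a n)
    (hA : ∀ u, HasSum (fun n => a n * offspringRatio u ^ n) (A u))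
    (hint : IntegrableOn (fun u => offspringWeight u * A u) (Ioi 0)) :
    HasSum (fun n => a n * criticalOffspring n)
      (512 / π * ∫ u in Ioi 0, offspringWeight u * A u) := by
  have h := hasSum_integral_of_nonneg_of_hasSum
    (F := fun n u => offspringWeight u * (a n * offspringRatio u ^ n))
    (fun n => by unfold offspringWeight offspringRatio; fun_prop)
    (fun n => ae_of_all _ fun u => mul_nonneg (offspringWeight_nonneg u)
      (mul_nonneg (ha n) (pow_nonneg (offspringRatio_nonneg u) n)))
    hint (ae_of_all _ fun u => (hA u).mul_left (offspringWeight u))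
  refine (h.mul_left (512 / π)).congr_fun fun n => ?_
  unfold criticalOffspring
  rw [← integral_const_mul, ← integral_const_mul, ← integral_const_mul]
  congr 1 with u
  ring

lemma hasSum_criticalOffspring : HasSum criticalOffspring 1 := by
  have hgeom (u : ℝ) :
      HasSum (fun n => 1 * offspringRatio u ^ n) (1 - offspringRatio u)⁻¹ := by
    simpa using hasSum_geometric_of_lt_one (offspringRatio_nonneg u) (offspringRatio_lt_one u)
  have h := hasSum_mul_criticalOffspring (fun _ => zero_le_one) hgeom
    integral_offspringWeight_div_one_sub_offspringRatio.1
  rw [integral_offspringWeight_div_one_sub_offspringRatio.2] at h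
  convert h using 1
  · simp
  · field_simp

lemma hasSum_coe_mul_criticalOffspring :
    HasSum (fun n : ℕ => (n : ℝ) * criticalOffspring n) 1 := by
  have h := hasSum_mul_criticalOffspring (fun n => n.cast_nonneg)
    (fun u => hasSum_coe_mul_geometric_of_norm_lt_one (by
      rw [Real.norm_of_nonneg (offspringRatio_nonneg u)]; exact offspringRatio_lt_one u))
    integral_offspringWeight_mul_offspringRatio_div_one_sub_offspringRatio_sq.1
  rw [integral_offspringWeight_mul_offspringRatio_div_one_sub_offspringRatio_sq.2] at h
  convert h using 1
  field_simp

lemma hasSum_criticalOffspring_mul_pow {y : ℝ} (hy : y ∈ Ico (0 : ℝ) 1) :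
    HasSum (fun n => criticalOffspring n * y ^ n)
      (1 - 8 / ((√((9 - y) / (1 - y)) + 2) ^ 2 - 1)) := by
  obtain ⟨hy0, hy1⟩ := hy
  have h9 : 9 ≤ (9 - y) / (1 - y) := by rw [le_div_iff₀ (by linarith)]; linarith
  have hs : 3 ≤ √((9 - y) / (1 - y)) := Real.le_sqrt_of_sq_le (by linarith)
  generalize hs_def : √((9 - y) / (1 - y)) = s at hs ⊢
  have hys : y = (s ^ 2 - 9) / (s ^ 2 - 1) := by
    rw [← hs_def, Real.sq_sqrt (by linarith)]
    field_simp
    ring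
  obtain ⟨hint, hval⟩ := integral_offspringWeight_div_one_sub_mul_offspringRatio hs hys
  have hgeom (u : ℝ) :
      HasSum (fun n => y ^ n * offspringRatio u ^ n) (1 - y * offspringRatio u)⁻¹ := by
    simpa only [mul_pow] using hasSum_geometric_of_lt_one
      (mul_nonneg hy0 (offspringRatio_nonneg u))
      ((mul_le_of_le_one_left (offspringRatio_nonneg u) hy1.le).trans_lt (offspringRatio_lt_one u))
  have h := hasSum_mul_criticalOffspring (fun n => pow_nonneg hy0 n) hgeom hint
  rw [hval] at h
  convert h using 1
  · simp only [mul_comm]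
  · field_simp

/-- `g` is the probability generating function of a critical offspring distribution on `ℕ`. -/
theorem g_is_pgf_of_critical_offspring (g : ℝ → ℝ)
    (hg : ∀ y ∈ Set.Ico (0 : ℝ) 1,
      g y = 1 - 8 / ((Real.sqrt ((9 - y) / (1 - y)) + 2) ^ 2 - 1)) :
    ∃ θ : ℕ → ℝ, (∀ n : ℕ, 0 ≤ θ n) ∧ (∑' n : ℕ, θ n) = 1 ∧
      (∑' n : ℕ, (n : ℝ) * θ n) = 1 ∧
      ∀ y ∈ Set.Ico (0 : ℝ) 1, (∑' n : ℕ, θ n * y ^ n) = g y := by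
  refine ⟨criticalOffspring, criticalOffspring_nonneg, hasSum_criticalOffspring.tsum_eq,
    hasSum_coe_mul_criticalOffspring.tsum_eq, fun y hy => ?_⟩
  rw [hg y hy]
  exact (hasSum_criticalOffspring_mul_pow hy).tsum_eq
end

section
/- Let C ∈ (0, 1/6) be a real number, and let f : ℕ → ℝ be a function such that f(h) ≥ 1 for every integer h ≥ 1, and such that for every integer h with h ≥ 6/C² and every integer m with 1 ≤ m ≤ C·h, one has f(h) ≥ C·min(m, (h/m)²·f(3m)) (where h/m denotes real division). Then f(h) ≥ (C²/6)·h for every integer h ≥ 1. -/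
set_option maxHeartbeats 1000000 in
/-- The deterministic induction underlying Proposition 9: if `f ≥ 1` and `f` satisfies the
functional inequality `f(h) ≥ C·min(m, (h/m)²·f(3m))` for all `h ≥ 6/C²` and `1 ≤ m ≤ Ch`,
then `f(h) ≥ (C²/6)·h` for all `h ≥ 1`. -/
theorem linear_lower_bound_of_functional_inequality (C : ℝ) (hC : C ∈ Set.Ioo (0 : ℝ) (1 / 6))
    (f : ℕ → ℝ) (hf1 : ∀ h : ℕ, 1 ≤ h → 1 ≤ f h)
    (hrec : ∀ h m : ℕ, 6 / C ^ 2 ≤ (h : ℝ) → 1 ≤ m → (m : ℝ) ≤ C * h →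
      C * min (m : ℝ) (((h : ℝ) / (m : ℝ)) ^ 2 * f (3 * m)) ≤ f h) :
    ∀ h : ℕ, 1 ≤ h → C ^ 2 / 6 * (h : ℝ) ≤ f h := by
  obtain ⟨hC0, hC6⟩ := hC
  have hCinv : 6 < 1 / C := by
    rw [lt_div_iff₀ hC0]; nlinarith
  intro h
  induction h using Nat.strong_induction_on with
  | _ h ih =>
    intro hh1
    have hH0 : (0 : ℝ) < h := by exact_mod_cast hh1
    by_cases hbig : 6 / C ^ 2 ≤ (h : ℝ)
    · -- large h: use the functional inequality with m = ⌈Ch/6⌉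
      have hH216 : (216 : ℝ) < (h : ℝ) := by
        have : 6 / C ^ 2 > 216 := by
          rw [gt_iff_lt, lt_div_iff₀ (by positivity)]
          nlinarith
        linarith
      have hx0 : (0 : ℝ) < C * h / 6 := by positivity
      obtain ⟨m, hm0, hmlb, hmub⟩ : ∃ m : ℕ, 0 < m ∧ C * h / 6 ≤ (m : ℝ) ∧
          (m : ℝ) < C * h / 6 + 1 :=
        ⟨⌈C * h / 6⌉₊, Nat.ceil_pos.mpr hx0, Nat.le_ceil _,
          Nat.ceil_lt_add_one (le_of_lt hx0)⟩
      have hCh : 36 < C * h := by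
        have h0 : (6 : ℝ) ≤ h * C ^ 2 := (div_le_iff₀ (by positivity)).mp hbig
        have h1 : 6 / C ≤ C * h := by
          rw [div_le_iff₀ hC0]
          nlinarith
        have h2 : (36 : ℝ) < 6 / C := by
          rw [lt_div_iff₀ hC0]; nlinarith
        linarith
      have hmCh : (m : ℝ) ≤ C * h := by nlinarith
      have h3m : 3 * m < h := by
        have : (3 * m : ℝ) < h := by
          push_cast
          have : (m : ℝ) < h / 12 + 1 := by nlinarith
          nlinarith
        exact_mod_cast this
      have hIH : C ^ 2 / 6 * ((3 * m : ℕ) : ℝ) ≤ f (3 * m) := by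
        apply ih _ h3m
        omega
      have hM0 : (0 : ℝ) < m := by exact_mod_cast hm0
      have hf3m : C ^ 2 * m / 2 ≤ f (3 * m) := by
        push_cast at hIH; nlinarith
      have key := hrec h m hbig hm0 hmCh
      have hmin : C * h / 6 ≤ min (m : ℝ) (((h : ℝ) / (m : ℝ)) ^ 2 * f (3 * m)) := by
        apply le_min hmlb
        have h1 : ((h : ℝ) / m) ^ 2 * f (3 * m) ≥ ((h : ℝ) / m) ^ 2 * (C ^ 2 * m / 2) := by
          apply mul_le_mul_of_nonneg_left hf3m (by positivity)
        have h2 : ((h : ℝ) / m) ^ 2 * (C ^ 2 * m / 2) = C ^ 2 * h ^ 2 / (2 * m) := by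
          field_simp
        have h3 : C ^ 2 * h ^ 2 / (2 * m) ≥ C * h / 2 := by
          rw [ge_iff_le, le_div_iff₀ (by positivity)]
          nlinarith
        linarith
      have hfinal : C * (C * h / 6) ≤ f h :=
        le_trans (mul_le_mul_of_nonneg_left hmin hC0.le) key
      nlinarith [hfinal]
    · -- small h: f h ≥ 1 ≥ C²/6 · h
      push_neg at hbig
      have h1 : C ^ 2 / 6 * (h : ℝ) ≤ 1 := by
        have : (h : ℝ) < 6 / C ^ 2 := hbig
        rw [div_mul_eq_mul_div, div_le_one (by norm_num)]
        have h2 : (h : ℝ) * C ^ 2 < 6 :=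
          (lt_div_iff₀ (show (0:ℝ) < C ^ 2 by positivity)).mp hbig
        nlinarith
      linarith [hf1 h hh1]
end

section
/- Let (κ_p)_{p ≥ 1} be a sequence of positive reals such that κ_p·2^p/√p → (64√3)/(π√2) as p → ∞, and for every integer r ≥ 1 set π_r = 1 − 8/((3 + 2r)² − 1) and Z_r = ∑_{p=1}^∞ κ_p·(2π_r)^p. Then Z_r is finite for every r ≥ 1, and there exist constants c₀, c₁ > 0 such that c₀·r³ ≤ Z_r ≤ c₁·r³ for every integer r ≥ 1. -/
lemma aux_nat_mul_pow_le (x : ℝ) (hx0 : 0 < x) (hx1 : x < 1) (k : ℕ) :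
    (k : ℝ) * x ^ k ≤ 1 / (1 - x) := by
  have hxk : 0 < x ^ k := pow_pos hx0 k
  have hix : 0 < 1/x := by positivity
  have h := one_add_mul_le_pow (a := 1/x - 1) (by linarith) k
  have h1x : (1 : ℝ) + (1/x - 1) = 1/x := by ring
  rw [h1x, div_pow, one_pow] at h
  have h2 : (1 + (k:ℝ) * (1/x - 1)) * x ^ k ≤ 1 := by
    have := mul_le_mul_of_nonneg_right h hxk.le
    rwa [div_mul_cancel₀ 1 (ne_of_gt hxk)] at this
  have h3 : (k:ℝ) * (1/x - 1) * x ^ k ≤ 1 := by nlinarith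
  have h4 : (k:ℝ) * x ^ k * (1 - x) ≤ x := by
    have hk0 : (0:ℝ) ≤ (k:ℝ) := Nat.cast_nonneg k
    have heq : (k:ℝ) * (1/x - 1) * x ^ k = (k:ℝ) * x ^ k * (1 - x) / x := by
      field_simp
    rw [heq, div_le_one hx0] at h3
    linarith
  rw [le_div_iff₀ (by linarith : (0:ℝ) < 1 - x)]
  linarith

lemma aux_sqrt_upper (k M : ℝ) (hk : 0 ≤ k) (hM : 0 < M) :
    Real.sqrt k ≤ (k + M) / (2 * Real.sqrt M) := by
  have hsM : 0 < Real.sqrt M := Real.sqrt_pos.2 hM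
  rw [le_div_iff₀ (by positivity)]
  nlinarith [sq_nonneg (Real.sqrt k - Real.sqrt M), Real.sq_sqrt hk, Real.sq_sqrt hM.le,
    Real.sqrt_nonneg k, Real.sqrt_nonneg M]

lemma aux_sqrt_lower (t k : ℝ) (ht : 0 ≤ t) (hk : 0 ≤ k) :
    t * k - t ^ 3 * k ^ 2 / 2 ≤ Real.sqrt k := by
  have hu : Real.sqrt k ^ 2 = k := Real.sq_sqrt hk
  have hu0 : 0 ≤ Real.sqrt k := Real.sqrt_nonneg k
  set u := Real.sqrt k with hud
  have hv0 : 0 ≤ t * u := mul_nonneg ht hu0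
  rw [← hu]
  nlinarith [mul_nonneg hu0 (mul_nonneg hv0 (sq_nonneg (t*u - 1))),
    mul_nonneg hu0 (sq_nonneg (t*u - 3/4))]

set_option maxHeartbeats 1000000 in
lemma aux_series_bounds (q : ℝ) (hq1 : 2/3 ≤ q) (hq2 : q < 1) :
    Summable (fun p : ℕ => Real.sqrt ((p:ℝ)+1) * q ^ (p+1)) ∧
    5 / (48 * Real.sqrt (1-q) ^ 3) ≤ (∑' p : ℕ, Real.sqrt ((p:ℝ)+1) * q ^ (p+1)) ∧
    (∑' p : ℕ, Real.sqrt ((p:ℝ)+1) * q ^ (p+1)) ≤ 1 / Real.sqrt (1-q) ^ 3 := by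
  have hq0 : 0 < q := by linarith
  have hε0 : 0 < 1 - q := by linarith
  set E := Real.sqrt (1-q) with hEdef
  have hE0 : 0 < E := Real.sqrt_pos.2 hε0
  have hE2 : E ^ 2 = 1 - q := Real.sq_sqrt hε0.le
  have habsq : ‖q‖ < 1 := by rw [Real.norm_eq_abs, abs_of_pos hq0]; exact hq2
  -- basic series
  have hFq : HasSum (fun n : ℕ => (n:ℝ) * q ^ n) (q / (1-q)^2) :=
    hasSum_coe_mul_geometric_of_norm_lt_one habsq
  have hGq : HasSum (fun n : ℕ => q ^ n) (1-q)⁻¹ := hasSum_geometric_of_lt_one hq0.le hq2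
  -- shifted first-moment series
  have hF1 : Summable (fun p : ℕ => ((p:ℝ)+1) * q ^ (p+1)) :=
    Summable.congr ((summable_nat_add_iff 1).2 hFq.summable) (fun p => by push_cast; ring)
  have htF1 : (∑' p : ℕ, ((p:ℝ)+1) * q ^ (p+1)) = q / (1-q)^2 := by
    have h0 : q / (1-q)^2 = ((0:ℕ):ℝ) * q ^ 0 + ∑' p : ℕ, ((p+1:ℕ):ℝ) * q ^ (p+1) := by
      rw [← hFq.tsum_eq]; exact Summable.tsum_eq_zero_add hFq.summable
    have hc : (∑' p : ℕ, ((p+1:ℕ):ℝ) * q ^ (p+1)) = ∑' p : ℕ, ((p:ℝ)+1) * q ^ (p+1) :=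
      tsum_congr (fun p => by push_cast; ring)
    simp only [Nat.cast_zero, zero_mul, zero_add] at h0
    rw [← hc, ← h0]
  -- shifted geometric series
  have hG1 : Summable (fun p : ℕ => q ^ (p+1)) := (summable_nat_add_iff 1).2 hGq.summable
  have htG1 : (∑' p : ℕ, q ^ (p+1)) = (1-q)⁻¹ - 1 := by
    have h0 := Summable.tsum_eq_zero_add hGq.summable
    rw [hGq.tsum_eq, pow_zero] at h0
    linarith
  -- sqrt(q) facts
  set x := Real.sqrt q with hxdef
  have hx2 : x ^ 2 = q := Real.sq_sqrt hq0.le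
  have hx0 : 0 < x := Real.sqrt_pos.2 hq0
  have hx1 : x < 1 := by nlinarith
  have h1x : (1-q)/2 ≤ 1 - x := by nlinarith
  have habsx : ‖x‖ < 1 := by rw [Real.norm_eq_abs, abs_of_pos hx0]; exact hx1
  have hFx : HasSum (fun n : ℕ => (n:ℝ) * x ^ n) (x / (1-x)^2) :=
    hasSum_coe_mul_geometric_of_norm_lt_one habsx
  have hFx1 : Summable (fun p : ℕ => ((p:ℝ)+1) * x ^ (p+1)) :=
    Summable.congr ((summable_nat_add_iff 1).2 hFx.summable) (fun p => by push_cast; ring)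
  have htFx1 : (∑' p : ℕ, ((p:ℝ)+1) * x ^ (p+1)) = x / (1-x)^2 := by
    have h0 : x / (1-x)^2 = ((0:ℕ):ℝ) * x ^ 0 + ∑' p : ℕ, ((p+1:ℕ):ℝ) * x ^ (p+1) := by
      rw [← hFx.tsum_eq]; exact Summable.tsum_eq_zero_add hFx.summable
    have hc : (∑' p : ℕ, ((p+1:ℕ):ℝ) * x ^ (p+1)) = ∑' p : ℕ, ((p:ℝ)+1) * x ^ (p+1) :=
      tsum_congr (fun p => by push_cast; ring)
    simp only [Nat.cast_zero, zero_mul, zero_add] at h0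
    rw [← hc, ← h0]
  -- second-moment series
  have hB : Summable (fun p : ℕ => ((p:ℝ)+1)^2 * q ^ (p+1)) :=
    Summable.congr ((summable_nat_add_iff 1).2
      (summable_pow_mul_geometric_of_norm_lt_one 2 habsq)) (fun p => by push_cast; ring)
  -- pointwise bound for second moment terms
  have hq_as_x : ∀ p : ℕ, q ^ (p+1) = (x ^ (p+1))^2 := by
    intro p; rw [← hx2]; ring
  have hBptw : ∀ p : ℕ, ((p:ℝ)+1)^2 * q ^ (p+1) ≤ (2/(1-q)) * (((p:ℝ)+1) * x ^ (p+1)) := by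
    intro p
    have hk0 : (0:ℝ) ≤ (p:ℝ)+1 := by positivity
    have hkx : ((p:ℝ)+1) * x ^ (p+1) ≤ 1 / (1-x) := by
      have := aux_nat_mul_pow_le x hx0 hx1 (p+1)
      push_cast at this; linarith
    have hkx0 : 0 ≤ ((p:ℝ)+1) * x ^ (p+1) := by positivity
    have h2e : 1/(1-x) ≤ 2/(1-q) := by
      rw [div_le_div_iff₀ (by linarith) (by linarith)]; linarith
    have : ((p:ℝ)+1)^2 * q ^ (p+1) = (((p:ℝ)+1) * x ^ (p+1)) * (((p:ℝ)+1) * x ^ (p+1)) := by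
      rw [hq_as_x p]; ring
    rw [this]
    calc (((p:ℝ)+1) * x ^ (p+1)) * (((p:ℝ)+1) * x ^ (p+1))
        ≤ (1/(1-x)) * (((p:ℝ)+1) * x ^ (p+1)) := mul_le_mul_of_nonneg_right hkx hkx0
      _ ≤ (2/(1-q)) * (((p:ℝ)+1) * x ^ (p+1)) := mul_le_mul_of_nonneg_right h2e hkx0
  have htB : (∑' p : ℕ, ((p:ℝ)+1)^2 * q ^ (p+1)) ≤ 8 / (1-q)^3 := by
    have h1 : (∑' p : ℕ, ((p:ℝ)+1)^2 * q ^ (p+1))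
        ≤ ∑' p : ℕ, (2/(1-q)) * (((p:ℝ)+1) * x ^ (p+1)) :=
      Summable.tsum_le_tsum hBptw hB (hFx1.mul_left _)
    rw [tsum_mul_left, htFx1] at h1
    have h2 : x / (1-x)^2 ≤ 4 / (1-q)^2 := by
      rw [div_le_div_iff₀ (by nlinarith) (by positivity)]
      nlinarith
    calc (∑' p : ℕ, ((p:ℝ)+1)^2 * q ^ (p+1)) ≤ (2/(1-q)) * (x/(1-x)^2) := h1
      _ ≤ (2/(1-q)) * (4/(1-q)^2) := by
          apply mul_le_mul_of_nonneg_left h2 (by positivity)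
      _ = 8 / (1-q)^3 := by field_simp; ring
  have htB0 : 0 ≤ (∑' p : ℕ, ((p:ℝ)+1)^2 * q ^ (p+1)) :=
    tsum_nonneg (fun p => by positivity)
  -- the main series is summable
  have hfptw_le : ∀ p : ℕ, Real.sqrt ((p:ℝ)+1) * q ^ (p+1) ≤ ((p:ℝ)+1) * q ^ (p+1) := by
    intro p
    have hk1 : (1:ℝ) ≤ (p:ℝ)+1 := by have := Nat.cast_nonneg (α:=ℝ) p; linarith
    have hu := Real.sq_sqrt (show (0:ℝ) ≤ (p:ℝ)+1 by positivity)
    have hu0 := Real.sqrt_nonneg ((p:ℝ)+1)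
    have hsk : Real.sqrt ((p:ℝ)+1) ≤ (p:ℝ)+1 := by nlinarith [sq_nonneg (Real.sqrt ((p:ℝ)+1) - 1)]
    exact mul_le_mul_of_nonneg_right hsk (by positivity)
  have hfpos : ∀ p : ℕ, 0 ≤ Real.sqrt ((p:ℝ)+1) * q ^ (p+1) := fun p => by positivity
  have hfsum : Summable (fun p : ℕ => Real.sqrt ((p:ℝ)+1) * q ^ (p+1)) :=
    Summable.of_nonneg_of_le hfpos hfptw_le hF1
  refine ⟨hfsum, ?_, ?_⟩
  · -- lower bound
    set t := E/4 with htdef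
    have ht0 : 0 ≤ t := by positivity
    have hgptw : ∀ p : ℕ, t * (((p:ℝ)+1) * q ^ (p+1)) - (t^3/2) * (((p:ℝ)+1)^2 * q ^ (p+1))
        ≤ Real.sqrt ((p:ℝ)+1) * q ^ (p+1) := by
      intro p
      have hk0 : (0:ℝ) ≤ (p:ℝ)+1 := by positivity
      have h := aux_sqrt_lower t ((p:ℝ)+1) ht0 hk0
      have hqp : (0:ℝ) ≤ q ^ (p+1) := by positivity
      nlinarith [mul_le_mul_of_nonneg_right h hqp]
    have hgsum : Summable (fun p : ℕ => t * (((p:ℝ)+1) * q ^ (p+1))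
        - (t^3/2) * (((p:ℝ)+1)^2 * q ^ (p+1))) := (hF1.mul_left t).sub (hB.mul_left (t^3/2))
    have h1 : (∑' p : ℕ, (t * (((p:ℝ)+1) * q ^ (p+1)) - (t^3/2) * (((p:ℝ)+1)^2 * q ^ (p+1))))
        ≤ ∑' p : ℕ, Real.sqrt ((p:ℝ)+1) * q ^ (p+1) := Summable.tsum_le_tsum hgptw hgsum hfsum
    rw [Summable.tsum_sub (hF1.mul_left t) (hB.mul_left (t^3/2)), tsum_mul_left, tsum_mul_left, htF1] at h1
    have h2 : (t^3/2) * (∑' p : ℕ, ((p:ℝ)+1)^2 * q ^ (p+1)) ≤ (t^3/2) * (8/(1-q)^3) :=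
      mul_le_mul_of_nonneg_left htB (by positivity)
    have h3 : t * (q/(1-q)^2) - (t^3/2) * (8/(1-q)^3)
        ≤ ∑' p : ℕ, Real.sqrt ((p:ℝ)+1) * q ^ (p+1) := by linarith
    refine le_trans ?_ h3
    rw [← hE2, htdef]
    have e1 : E/4 * (q/(E^2)^2) = q/(4*E^3) := by field_simp
    have e2 : ((E/4)^3/2) * (8/(E^2)^3) = 1/(16*E^3) := by field_simp; ring
    rw [e1, e2]
    have e3 : 5/(48*E^3) = 1/(6*E^3) - 1/(16*E^3) := by field_simp; ring
    have e4 : 1/(6*E^3) ≤ q/(4*E^3) := by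
      rw [div_le_div_iff₀ (by positivity) (by positivity)]
      nlinarith [pow_pos hE0 3]
    linarith
  · -- upper bound
    set M : ℝ := (1-q)⁻¹ with hMdef
    have hM0 : 0 < M := by positivity
    have hsqrtM : Real.sqrt M = E⁻¹ := by rw [hMdef, Real.sqrt_inv]
    have hptw : ∀ p : ℕ, Real.sqrt ((p:ℝ)+1) * q ^ (p+1)
        ≤ (E/2) * (((p:ℝ)+1) * q ^ (p+1)) + (E/2*M) * q ^ (p+1) := by
      intro p
      have hk0 : (0:ℝ) ≤ (p:ℝ)+1 := by positivity
      have h := aux_sqrt_upper ((p:ℝ)+1) M hk0 hM0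
      rw [hsqrtM] at h
      have he : ((p:ℝ)+1+M) / (2*E⁻¹) = (E/2) * ((p:ℝ)+1) + (E/2*M) := by
        field_simp
      rw [he] at h
      have hqp : (0:ℝ) ≤ q ^ (p+1) := by positivity
      nlinarith [mul_le_mul_of_nonneg_right h hqp]
    have hrhs : Summable (fun p : ℕ => (E/2) * (((p:ℝ)+1) * q ^ (p+1)) + (E/2*M) * q ^ (p+1)) :=
      (hF1.mul_left _).add (hG1.mul_left _)
    have h1 : (∑' p : ℕ, Real.sqrt ((p:ℝ)+1) * q ^ (p+1))
        ≤ ∑' p : ℕ, ((E/2) * (((p:ℝ)+1) * q ^ (p+1)) + (E/2*M) * q ^ (p+1)) :=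
      Summable.tsum_le_tsum hptw hfsum hrhs
    rw [Summable.tsum_add (hF1.mul_left _) (hG1.mul_left _), tsum_mul_left, tsum_mul_left, htF1, htG1] at h1
    refine h1.trans ?_
    rw [hMdef, ← hE2]
    have e1 : E/2 * (q/(E^2)^2) = q/(2*E^3) := by field_simp
    have e2 : E/2*(E^2)⁻¹ * ((E^2)⁻¹ - 1) = 1/(2*E^3) - E/2/(E^2) := by field_simp
    rw [e1, e2]
    have e3 : q/(2*E^3) ≤ 1/(2*E^3) := by
      rw [div_le_div_iff₀ (by positivity) (by positivity)]
      nlinarith [pow_pos hE0 3]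
    have e4 : 0 ≤ E/2/(E^2) := by positivity
    have e5 : 1/(2*E^3) + 1/(2*E^3) = 1/E^3 := by field_simp; ring
    linarith

lemma aux_kappa_bounds (κ : ℕ → ℝ) (L : ℝ) (hL : 0 < L)
    (hκpos : ∀ p : ℕ, 1 ≤ p → 0 < κ p)
    (hκasymp : Filter.Tendsto (fun p : ℕ => κ p * 2 ^ p / Real.sqrt p) Filter.atTop (nhds L)) :
    ∃ a b : ℝ, 0 < a ∧ 0 < b ∧ ∀ p : ℕ, 1 ≤ p →
      a * Real.sqrt p ≤ κ p * 2 ^ p ∧ κ p * 2 ^ p ≤ b * Real.sqrt p := by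
  set g : ℕ → ℝ := fun p => κ p * 2 ^ p / Real.sqrt p with hg
  have hmem : ∀ᶠ p in Filter.atTop, g p ∈ Set.Ioo (L/2) (3*L/2) :=
    hκasymp (Ioo_mem_nhds (by linarith) (by linarith))
  obtain ⟨P, hP⟩ := Filter.eventually_atTop.mp hmem
  set Q := max P 1 with hQ
  have hne : (Finset.Icc 1 Q).Nonempty := ⟨1, by simp [Finset.mem_Icc, hQ]⟩
  obtain ⟨p₀, hp₀m, hmin⟩ := Finset.exists_min_image (Finset.Icc 1 Q) g hne
  obtain ⟨p₁, hp₁m, hmax⟩ := Finset.exists_max_image (Finset.Icc 1 Q) g hne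
  have hgpos : ∀ p : ℕ, 1 ≤ p → 0 < g p := by
    intro p hp
    have hp0 : (0:ℝ) < p := by exact_mod_cast hp
    have hsp : 0 < Real.sqrt p := Real.sqrt_pos.2 hp0
    exact div_pos (mul_pos (hκpos p hp) (by positivity)) hsp
  refine ⟨min (g p₀) (L/2), max (g p₁) (3*L/2), lt_min (hgpos p₀ (Finset.mem_Icc.mp hp₀m).1) (by linarith),
    lt_max_of_lt_right (by linarith), ?_⟩
  intro p hp
  have hp0 : (0:ℝ) < p := by exact_mod_cast hp
  have hsp : 0 < Real.sqrt p := Real.sqrt_pos.2 hp0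
  have hratio : min (g p₀) (L/2) ≤ g p ∧ g p ≤ max (g p₁) (3*L/2) := by
    rcases le_or_gt p Q with h | h
    · have hmem' : p ∈ Finset.Icc 1 Q := Finset.mem_Icc.mpr ⟨hp, h⟩
      exact ⟨le_trans (min_le_left _ _) (hmin p hmem'),
        le_trans (hmax p hmem') (le_max_left _ _)⟩
    · have hPp : P ≤ p := le_trans (le_max_left P 1) h.le
      obtain ⟨h1, h2⟩ := hP p hPp
      exact ⟨le_trans (min_le_right _ _) h1.le, le_trans h2.le (le_max_right _ _)⟩
    
  constructor
  · calc min (g p₀) (L/2) * Real.sqrt p ≤ g p * Real.sqrt p :=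
          mul_le_mul_of_nonneg_right hratio.1 hsp.le
      _ = κ p * 2 ^ p := by rw [hg]; field_simp
  · calc κ p * 2 ^ p = g p * Real.sqrt p := by rw [hg]; field_simp
      _ ≤ max (g p₁) (3*L/2) * Real.sqrt p := mul_le_mul_of_nonneg_right hratio.2 hsp.le

set_option maxHeartbeats 1000000 in
/-- The normalizing constant `Z_r = ∑_{p≥1} κ_p (2π_r)^p` is finite and grows like `r³`. -/
theorem Z_r_cubic_growth (κ : ℕ → ℝ) (hκpos : ∀ p : ℕ, 1 ≤ p → 0 < κ p)
    (hκasymp : Filter.Tendsto (fun p : ℕ => κ p * 2 ^ p / Real.sqrt p) Filter.atTop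
      (nhds (64 * Real.sqrt 3 / (Real.pi * Real.sqrt 2))))
    (piR : ℕ → ℝ) (hpi : ∀ r : ℕ, piR r = 1 - 8 / ((3 + 2 * (r : ℝ)) ^ 2 - 1))
    (Z : ℕ → ℝ) (hZ : ∀ r : ℕ, Z r = ∑' p : ℕ, κ (p + 1) * (2 * piR r) ^ (p + 1)) :
    (∀ r : ℕ, 1 ≤ r → Summable (fun p : ℕ => κ (p + 1) * (2 * piR r) ^ (p + 1))) ∧
    ∃ c₀ c₁ : ℝ, 0 < c₀ ∧ 0 < c₁ ∧ ∀ r : ℕ, 1 ≤ r →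
      c₀ * (r : ℝ) ^ 3 ≤ Z r ∧ Z r ≤ c₁ * (r : ℝ) ^ 3 := by
  have hL : 0 < 64 * Real.sqrt 3 / (Real.pi * Real.sqrt 2) := by
    have h3 : 0 < Real.sqrt 3 := Real.sqrt_pos.2 (by norm_num)
    have h2 : 0 < Real.sqrt 2 := Real.sqrt_pos.2 (by norm_num)
    have hπ := Real.pi_pos
    positivity
  obtain ⟨a, b, ha, hb, hab⟩ := aux_kappa_bounds κ _ hL hκpos hκasymp
  have main : ∀ r : ℕ, 1 ≤ r →
      Summable (fun p : ℕ => κ (p + 1) * (2 * piR r) ^ (p + 1)) ∧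
      5*a/384 * (r:ℝ)^3 ≤ Z r ∧ Z r ≤ 8*b * (r:ℝ)^3 := by
    intro r hr
    have hr1 : (1:ℝ) ≤ (r:ℝ) := by exact_mod_cast hr
    have h1r : (0:ℝ) < 1 + r := by linarith
    have h2r : (0:ℝ) < 2 + r := by linarith
    have hr0 : (0:ℝ) < (r:ℝ) := by linarith
    set q := piR r with hqdef
    have hd0 : ((3 + 2*(r:ℝ))^2 - 1) ≠ 0 := by nlinarith
    have hεq : 1 - q = 2 / ((1+(r:ℝ)) * (2+(r:ℝ))) := by
      rw [hqdef, hpi r]; field_simp; ring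
    have hε0 : 0 < 1 - q := by rw [hεq]; positivity
    have hεle : 1 - q ≤ 1/3 := by
      rw [hεq, div_le_div_iff₀ (by positivity) (by norm_num)]; nlinarith
    have hq1 : 2/3 ≤ q := by linarith
    have hq2 : q < 1 := by linarith
    have hq0 : 0 < q := by linarith
    set E := Real.sqrt (1-q) with hEdef
    have hE0 : 0 < E := Real.sqrt_pos.2 hε0
    have hElow : 1/(2*(r:ℝ)) ≤ E := by
      rw [hEdef, Real.le_sqrt (by positivity) hε0.le, hεq, div_pow, one_pow,
        div_le_div_iff₀ (by positivity) (by positivity)]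
      nlinarith
    have hEhigh : E ≤ 2/(r:ℝ) := by
      have h : 1 - q ≤ (2/(r:ℝ))^2 := by
        rw [hεq, div_pow, div_le_div_iff₀ (by positivity) (by positivity)]
        nlinarith
      calc E ≤ Real.sqrt ((2/(r:ℝ))^2) := Real.sqrt_le_sqrt h
        _ = 2/(r:ℝ) := Real.sqrt_sq (by positivity)
    have hE3low : 1/(8*(r:ℝ)^3) ≤ E^3 := by
      have h := pow_le_pow_left₀ (by positivity : (0:ℝ) ≤ 1/(2*(r:ℝ))) hElow 3
      calc 1/(8*(r:ℝ)^3) = (1/(2*(r:ℝ)))^3 := by ring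
        _ ≤ E^3 := h
    have hE3high : E^3 ≤ 8/(r:ℝ)^3 := by
      calc E^3 ≤ (2/(r:ℝ))^3 := pow_le_pow_left₀ hE0.le hEhigh 3
        _ = 8/(r:ℝ)^3 := by ring
    obtain ⟨hsum, hSlow, hShigh⟩ := aux_series_bounds q hq1 hq2
    rw [← hEdef] at hSlow hShigh
    have hκb : ∀ p : ℕ,
        a * (Real.sqrt ((p:ℝ)+1) * q^(p+1)) ≤ κ (p+1) * (2*q)^(p+1) ∧
        κ (p+1) * (2*q)^(p+1) ≤ b * (Real.sqrt ((p:ℝ)+1) * q^(p+1)) := by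
      intro p
      have h := hab (p+1) (by omega)
      have hc : ((p+1:ℕ):ℝ) = (p:ℝ)+1 := by push_cast; ring
      rw [hc] at h
      have hqp : (0:ℝ) ≤ q^(p+1) := by positivity
      have hterm : κ (p+1) * (2*q)^(p+1) = (κ (p+1) * 2^(p+1)) * q^(p+1) := by
        rw [mul_pow]; ring
      constructor
      · rw [hterm]
        calc a * (Real.sqrt ((p:ℝ)+1) * q^(p+1)) = (a * Real.sqrt ((p:ℝ)+1)) * q^(p+1) := by ring
          _ ≤ (κ (p+1) * 2^(p+1)) * q^(p+1) := mul_le_mul_of_nonneg_right h.1 hqp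
      · rw [hterm]
        calc (κ (p+1) * 2^(p+1)) * q^(p+1) ≤ (b * Real.sqrt ((p:ℝ)+1)) * q^(p+1) :=
              mul_le_mul_of_nonneg_right h.2 hqp
          _ = b * (Real.sqrt ((p:ℝ)+1) * q^(p+1)) := by ring
    have hκsum : Summable (fun p : ℕ => κ (p+1) * (2*q)^(p+1)) :=
      Summable.of_nonneg_of_le
        (fun p => by have := hκpos (p+1) (by omega); positivity)
        (fun p => (hκb p).2) (hsum.mul_left b)
    have hZr := hZ r
    rw [← hqdef] at hZr
    have hlo : a * (∑' p : ℕ, Real.sqrt ((p:ℝ)+1) * q^(p+1)) ≤ Z r := by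
      rw [hZr, ← tsum_mul_left]
      exact Summable.tsum_le_tsum (fun p => (hκb p).1) (hsum.mul_left a) hκsum
    have hhi : Z r ≤ b * (∑' p : ℕ, Real.sqrt ((p:ℝ)+1) * q^(p+1)) := by
      rw [hZr, ← tsum_mul_left]
      exact Summable.tsum_le_tsum (fun p => (hκb p).2) hκsum (hsum.mul_left b)
    refine ⟨hκsum, ?_, ?_⟩
    · have hrE : E^3 * (r:ℝ)^3 ≤ 8 := by
        have := (le_div_iff₀ (by positivity : (0:ℝ) < (r:ℝ)^3)).mp hE3high
        linarith
      have hS1 : 5*(r:ℝ)^3/384 ≤ 5/(48*E^3) := by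
        rw [div_le_div_iff₀ (by norm_num) (by positivity)]
        nlinarith
      calc 5*a/384 * (r:ℝ)^3 = a * (5*(r:ℝ)^3/384) := by ring
        _ ≤ a * (5/(48*E^3)) := mul_le_mul_of_nonneg_left hS1 ha.le
        _ ≤ a * (∑' p : ℕ, Real.sqrt ((p:ℝ)+1) * q^(p+1)) :=
            mul_le_mul_of_nonneg_left hSlow ha.le
        _ ≤ Z r := hlo
    · have hrE : 1 ≤ 8*(r:ℝ)^3 * E^3 := by
        rw [div_le_iff₀ (by positivity : (0:ℝ) < 8*(r:ℝ)^3)] at hE3low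
        nlinarith
      have hS2 : 1/E^3 ≤ 8*(r:ℝ)^3 := by
        rw [div_le_iff₀ (by positivity)]
        nlinarith [pow_pos hE0 3]
      calc Z r ≤ b * (∑' p : ℕ, Real.sqrt ((p:ℝ)+1) * q^(p+1)) := hhi
        _ ≤ b * (1/E^3) := mul_le_mul_of_nonneg_left hShigh hb.le
        _ ≤ b * (8*(r:ℝ)^3) := mul_le_mul_of_nonneg_left hS2 hb.le
        _ = 8*b * (r:ℝ)^3 := by ring
  exact ⟨fun r hr => (main r hr).1,
    5*a/384, 8*b, by positivity, by positivity,
    fun r hr => ⟨(main r hr).2.1, (main r hr).2.2⟩⟩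
end

section
/- Let (κ_p)_{p ≥ 1} be a sequence of positive reals such that κ_p·2^p/√p → (64√3)/(π√2) as p → ∞, and for every integer r ≥ 1 set π_r = 1 − 8/((3 + 2r)² − 1) and Z_r = ∑_{p=1}^∞ κ_p·(2π_r)^p (which is finite). Then there exist constants M₁ > 0 and ρ > 0 such that for every real a > 0 and every integer r ≥ 1, (1/Z_r)·∑_{p ≥ a·r²} κ_p·(2π_r)^p ≤ M₁·e^{−ρ·a}. -/
open Filter Real

lemma aux_sqrt_le (x : ℝ) (hx : 0 ≤ x) : Real.sqrt x ≤ (x + 1) / 2 := by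
  nlinarith [Real.sq_sqrt hx, Real.sqrt_nonneg x, sq_nonneg (Real.sqrt x - 1)]

lemma aux_sqrt_r (x r : ℝ) (hx : 0 ≤ x) (hr : 0 < r) : Real.sqrt x ≤ (x / r + r) / 2 := by
  have h1 := Real.sq_sqrt hx
  have h2 := Real.sqrt_nonneg x
  have key := sq_nonneg (Real.sqrt x - r)
  have heq : (x / r + r) / 2 = (x + r ^ 2) / (2 * r) := by field_simp
  rw [heq, le_div_iff₀ (by positivity)]
  nlinarith

lemma aux_sqrt_add (x y : ℝ) (hx : 0 ≤ x) (hy : 0 ≤ y) :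
    Real.sqrt (x + y) ≤ Real.sqrt x + Real.sqrt y := by
  have h1 := Real.sq_sqrt hx
  have h2 := Real.sq_sqrt hy
  have h3 := Real.sqrt_nonneg x
  have h4 := Real.sqrt_nonneg y
  have h5 : x + y ≤ (Real.sqrt x + Real.sqrt y) ^ 2 := by nlinarith
  calc Real.sqrt (x + y) ≤ Real.sqrt ((Real.sqrt x + Real.sqrt y) ^ 2) :=
        Real.sqrt_le_sqrt h5
    _ = Real.sqrt x + Real.sqrt y := Real.sqrt_sq (by positivity)

lemma aux_exp_le_one_sub (x : ℝ) (h0 : 0 ≤ x) (h2 : x ≤ 1 / 2) :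
    Real.exp (-(2 * x)) ≤ 1 - x := by
  have h := Real.add_one_le_exp (2 * x)
  have hpos : (0 : ℝ) < Real.exp (2 * x) := Real.exp_pos _
  rw [Real.exp_neg, inv_le_iff_one_le_mul₀ hpos]
  nlinarith

lemma aux_one_sub_le_exp (x : ℝ) : 1 - x ≤ Real.exp (-x) := by
  have := Real.add_one_le_exp (-x)
  linarith

lemma aux_summable_sqrt (q : ℝ) (h0 : 0 ≤ q) (h1 : q < 1) :
    Summable (fun p : ℕ => Real.sqrt p * q ^ p) := by
  have hs : Summable (fun p : ℕ => ((p : ℝ) + 1) / 2 * q ^ p) := by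
    have h1' : Summable (fun p : ℕ => (p : ℝ) * q ^ p) := by
      have := summable_pow_mul_geometric_of_norm_lt_one (R := ℝ) 1 (by
        rwa [Real.norm_eq_abs, abs_of_nonneg h0])
      simpa using this
    have h2' : Summable (fun p : ℕ => q ^ p) := summable_geometric_of_lt_one h0 h1
    exact ((h1'.add h2').div_const 2).congr (fun p => by ring)
  apply Summable.of_nonneg_of_le _ _ hs
  · intro p; positivity
  · intro p
    exact mul_le_mul_of_nonneg_right (aux_sqrt_le _ (by positivity)) (by positivity)

set_option maxHeartbeats 2000000 in
/-- Upper tail estimate: `(1/Z_r)·∑_{p ≥ ar²} κ_p (2π_r)^p ≤ M₁ e^{−ρa}` uniformly in `r ≥ 1`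
and `a > 0`. -/
theorem hull_perimeter_upper_tail (κ : ℕ → ℝ) (hκpos : ∀ p : ℕ, 1 ≤ p → 0 < κ p)
    (hκasymp : Filter.Tendsto (fun p : ℕ => κ p * 2 ^ p / Real.sqrt p) Filter.atTop
      (nhds (64 * Real.sqrt 3 / (Real.pi * Real.sqrt 2))))
    (piR : ℕ → ℝ) (hpi : ∀ r : ℕ, piR r = 1 - 8 / ((3 + 2 * (r : ℝ)) ^ 2 - 1))
    (Z : ℕ → ℝ) (hZ : ∀ r : ℕ, Z r = ∑' p : ℕ, κ (p + 1) * (2 * piR r) ^ (p + 1))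
    (hZfin : ∀ r : ℕ, 1 ≤ r → Summable (fun p : ℕ => κ (p + 1) * (2 * piR r) ^ (p + 1))) :
    ∃ M₁ ρ : ℝ, 0 < M₁ ∧ 0 < ρ ∧ ∀ a : ℝ, 0 < a → ∀ r : ℕ, 1 ≤ r →
      (∑' p : ℕ, if a * (r : ℝ) ^ 2 ≤ (p : ℝ) then κ p * (2 * piR r) ^ p else 0) / Z r
        ≤ M₁ * Real.exp (-ρ * a) := by
  classical
  set L : ℝ := 64 * Real.sqrt 3 / (Real.pi * Real.sqrt 2) with hLdef
  have hL : 0 < L := by rw [hLdef]; positivity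
  -- uniform upper bound for κ p 2^p / √p
  obtain ⟨K₀, hK₀⟩ := hκasymp.bddAbove_range
  set K : ℝ := max K₀ 1 with hKdef
  have hK1 : (1 : ℝ) ≤ K := le_max_right _ _
  have hKpos : (0 : ℝ) < K := lt_of_lt_of_le one_pos hK1
  have hKs : ∀ p : ℕ, 1 ≤ p → κ p * 2 ^ p ≤ K * Real.sqrt p := by
    intro p hp
    have hppos : (0 : ℝ) < p := by exact_mod_cast hp
    have hsp : 0 < Real.sqrt p := Real.sqrt_pos.mpr hppos
    have h := (hK₀ (Set.mem_range_self p)).trans (le_max_left K₀ 1)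
    calc κ p * 2 ^ p = κ p * 2 ^ p / Real.sqrt p * Real.sqrt p :=
          (div_mul_cancel₀ _ hsp.ne').symm
      _ ≤ K * Real.sqrt p := mul_le_mul_of_nonneg_right h hsp.le
  -- eventual lower bound
  have hev : ∀ᶠ p in Filter.atTop, L / 2 < κ p * 2 ^ p / Real.sqrt p :=
    hκasymp.eventually (eventually_gt_nhds (by linarith))
  obtain ⟨P₀, hP₀⟩ := Filter.eventually_atTop.mp hev
  set P : ℕ := max P₀ 1 with hPdef
  have hPs : ∀ p : ℕ, P ≤ p → L / 2 * Real.sqrt p ≤ κ p * 2 ^ p := by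
    intro p hp
    have hp1 : 1 ≤ p := le_trans (le_max_right _ _) hp
    have hppos : (0 : ℝ) < p := by exact_mod_cast hp1
    have hsp : 0 < Real.sqrt p := Real.sqrt_pos.mpr hppos
    have h := hP₀ p (le_trans (le_max_left _ _) hp)
    exact ((lt_div_iff₀ hsp).mp h).le
  set Q : ℕ := P + 1 with hQdef
  have hκ1 : 0 < κ 1 := hκpos 1 le_rfl
  have hQposR : (0 : ℝ) < (Q : ℝ) := by exact_mod_cast Nat.succ_pos P
  set c : ℝ := min (L / 2 * Real.exp (-8)) (4 / 3 * κ 1 / (Q : ℝ) ^ 3) with hcdef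
  have hc : 0 < c := lt_min (by positivity) (div_pos (by linarith) (by positivity))
  have hcle1 : c ≤ L / 2 * Real.exp (-8) := min_le_left _ _
  have hcle2 : c ≤ 4 / 3 * κ 1 / (Q : ℝ) ^ 3 := min_le_right _ _
  clear_value L K c
  refine ⟨12 * K / c, 1 / 6, div_pos (by linarith) hc, by norm_num, ?_⟩
  intro a ha r hr
  set R : ℝ := (r : ℝ) with hRdef
  have hR : (1 : ℝ) ≤ R := by rw [hRdef]; exact_mod_cast hr
  have hR0 : (0 : ℝ) < R := lt_of_lt_of_le one_pos hR
  set q : ℝ := piR r with hqdef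
  have hden : (0 : ℝ) < (R + 1) * (R + 2) := by positivity
  have hqval : q = 1 - 2 / ((R + 1) * (R + 2)) := by
    have hne : ((3 + 2 * R) ^ 2 - 1) ≠ 0 := by nlinarith
    rw [hqdef, hpi r, ← hRdef]
    congr 1
    rw [div_eq_div_iff hne hden.ne']
    ring
  have hu6 : (6 : ℝ) ≤ (R + 1) * (R + 2) := by nlinarith
  have hult : 2 / ((R + 1) * (R + 2)) ≤ 1 / 3 := by
    rw [div_le_div_iff₀ hden (by norm_num)]; nlinarith
  have hq0 : 0 ≤ q := by
    have : (0:ℝ) < 2 / ((R + 1) * (R + 2)) := by positivity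
    rw [hqval]; linarith
  have hq1 : q < 1 := by
    have : (0:ℝ) < 2 / ((R + 1) * (R + 2)) := by positivity
    rw [hqval]; linarith
  have hq23 : 2 / 3 ≤ q := by rw [hqval]; linarith
  clear_value R q
  set u : ℝ := 1 - q with hudef
  have hu : u = 2 / ((R + 1) * (R + 2)) := by rw [hudef, hqval]; ring
  clear_value u
  have hupos : 0 < u := by rw [hu]; positivity
  have hu_lb : 1 / (3 * R ^ 2) ≤ u := by
    rw [hu, div_le_div_iff₀ (by positivity) hden]; nlinarith
  have hu_ub2 : u ≤ 2 / R ^ 2 := by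
    rw [hu, div_le_div_iff₀ hden (by positivity)]; nlinarith
  have h3Ru : 1 ≤ u * (3 * R ^ 2) := by
    rw [div_le_iff₀ (by positivity)] at hu_lb; exact hu_lb
  have huinv : u⁻¹ ≤ 3 * R ^ 2 := by
    rw [← one_div, div_le_iff₀ hupos]; linarith
  have hq_ub : q ≤ Real.exp (-(1 / (3 * R ^ 2))) := by
    have h1 := aux_one_sub_le_exp (1 / (3 * R ^ 2))
    have h2 : q ≤ 1 - 1 / (3 * R ^ 2) := by
      have : q = 1 - u := by rw [hudef]; ring
      linarith
    linarith
  have hq_lb : Real.exp (-(4 / R ^ 2)) ≤ q := by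
    have hu12 : u ≤ 1 / 2 := by rw [hu]; linarith
    have h1 : Real.exp (-(2 * u)) ≤ 1 - u := aux_exp_le_one_sub u hupos.le hu12
    have h2 : Real.exp (-(4 / R ^ 2)) ≤ Real.exp (-(2 * u)) := by
      apply Real.exp_le_exp.mpr
      have h2a : 2 * u ≤ 2 * (2 / R ^ 2) := by linarith
      have h2b : 2 * (2 / R ^ 2) = 4 / R ^ 2 := by ring
      linarith
    have h3 : 1 - u = q := by rw [hudef]; ring
    linarith
  -- lower bound on Z r
  have hsummable := hZfin r hr
  rw [← hqdef] at hsummable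
  have hterm_nonneg : ∀ i : ℕ, 0 ≤ κ (i + 1) * (2 * q) ^ (i + 1) := fun i =>
    mul_nonneg (hκpos (i + 1) (Nat.le_add_left 1 i)).le
      (pow_nonneg (by linarith) _)
  have hZlb : c * R ^ 3 ≤ Z r := by
    rw [hZ r, ← hqdef]
    by_cases hrQ : Q ≤ r
    · -- large r
      have hterm : ∀ p ∈ Finset.Ico (r ^ 2) (2 * r ^ 2),
          L / 2 * Real.exp (-8) * R ≤ κ (p + 1) * (2 * q) ^ (p + 1) := by
        intro p hp
        rw [Finset.mem_Ico] at hp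
        have hp2 : p + 1 ≤ 2 * r ^ 2 := hp.2
        have hPle : P ≤ p + 1 := by
          have h1 : r ≤ r ^ 2 := Nat.le_self_pow two_ne_zero r
          have h2 : P + 1 ≤ r := hrQ
          omega
        have hs1 : L / 2 * Real.sqrt ((p : ℝ) + 1) ≤ κ (p + 1) * 2 ^ (p + 1) := by
          have := hPs (p + 1) hPle
          push_cast at this
          exact this
        have hsqrt : R ≤ Real.sqrt ((p : ℝ) + 1) := by
          have hle : R ^ 2 ≤ (p : ℝ) + 1 := by
            have h1 : ((r ^ 2 : ℕ) : ℝ) ≤ (p : ℝ) := Nat.cast_le.mpr hp.1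
            have h2 : ((r ^ 2 : ℕ) : ℝ) = R ^ 2 := by push_cast; rw [hRdef]
            linarith
          calc R = Real.sqrt (R ^ 2) := (Real.sqrt_sq hR0.le).symm
            _ ≤ Real.sqrt ((p : ℝ) + 1) := Real.sqrt_le_sqrt hle
        have hqp : Real.exp (-8) ≤ q ^ (p + 1) := by
          have h1 : q ^ (2 * r ^ 2) ≤ q ^ (p + 1) := pow_le_pow_of_le_one hq0 hq1.le hp2
          have h2 : (Real.exp (-(4 / R ^ 2))) ^ (2 * r ^ 2) ≤ q ^ (2 * r ^ 2) :=
            pow_le_pow_left₀ (Real.exp_nonneg _) hq_lb _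
          have h3 : Real.exp (((2 * r ^ 2 : ℕ) : ℝ) * (-(4 / R ^ 2)))
              = (Real.exp (-(4 / R ^ 2))) ^ (2 * r ^ 2) := Real.exp_nat_mul _ _
          have h4 : ((2 * r ^ 2 : ℕ) : ℝ) * (-(4 / R ^ 2)) = -8 := by
            push_cast
            rw [← hRdef]
            field_simp
            ring
          rw [← h4, h3] at *
          exact le_trans h2 h1
        calc L / 2 * Real.exp (-8) * R = L / 2 * R * Real.exp (-8) := by ring
          _ ≤ L / 2 * Real.sqrt ((p : ℝ) + 1) * q ^ (p + 1) :=
              mul_le_mul (mul_le_mul_of_nonneg_left hsqrt (by linarith)) hqp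
                (Real.exp_nonneg _) (mul_nonneg (by linarith) (Real.sqrt_nonneg _))
          _ ≤ κ (p + 1) * 2 ^ (p + 1) * q ^ (p + 1) :=
              mul_le_mul_of_nonneg_right hs1 (pow_nonneg hq0 _)
          _ = κ (p + 1) * (2 * q) ^ (p + 1) := by rw [mul_pow]; ring
      have hcard := Finset.card_nsmul_le_sum (Finset.Ico (r ^ 2) (2 * r ^ 2))
        (fun p => κ (p + 1) * (2 * q) ^ (p + 1)) _ hterm
      have hcardval : (Finset.Ico (r ^ 2) (2 * r ^ 2)).card = r ^ 2 := by
        rw [Nat.card_Ico]; omega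
      rw [hcardval, nsmul_eq_mul] at hcard
      have hsum_le := Summable.sum_le_tsum (Finset.Ico (r ^ 2) (2 * r ^ 2))
        (fun i _ => hterm_nonneg i) hsummable
      have hcast : ((r ^ 2 : ℕ) : ℝ) = R ^ 2 := by push_cast; rw [hRdef]
      rw [hcast] at hcard
      have hstep : c * R ^ 3 ≤ (L / 2 * Real.exp (-8)) * R ^ 3 :=
        mul_le_mul_of_nonneg_right hcle1 (by positivity)
      have heqc : (L / 2 * Real.exp (-8)) * R ^ 3 = R ^ 2 * (L / 2 * Real.exp (-8) * R) := by ring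
      linarith
    · -- small r
      have h0 : κ 1 * (2 * q) ^ 1 ≤ ∑' p : ℕ, κ (p + 1) * (2 * q) ^ (p + 1) := by
        have := Summable.le_tsum hsummable 0 (fun j _ => hterm_nonneg j)
        simpa using this
      have h1 : 4 / 3 * κ 1 ≤ κ 1 * (2 * q) ^ 1 := by
        rw [pow_one]; nlinarith
      have hRQ : R ≤ (Q : ℝ) := by
        rw [hRdef]; exact_mod_cast (lt_of_not_ge hrQ).le
      calc c * R ^ 3 ≤ (4 / 3 * κ 1 / (Q : ℝ) ^ 3) * (Q : ℝ) ^ 3 := by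
            apply mul_le_mul hcle2 (pow_le_pow_left₀ hR0.le hRQ 3) (by positivity)
              (le_of_lt (lt_of_lt_of_le hc hcle2))
        _ = 4 / 3 * κ 1 := by field_simp
        _ ≤ ∑' p : ℕ, κ (p + 1) * (2 * q) ^ (p + 1) := le_trans h1 h0
  -- tail bound
  set N : ℕ := ⌈a * R ^ 2⌉₊ with hNdef
  have haR : 0 < a * R ^ 2 := by positivity
  have hN1 : 1 ≤ N := Nat.one_le_iff_ne_zero.mpr (Nat.pos_iff_ne_zero.mp (Nat.ceil_pos.mpr haR))
  have hNge : a * R ^ 2 ≤ (N : ℝ) := Nat.le_ceil _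
  have hNlt : (N : ℝ) < a * R ^ 2 + 1 := Nat.ceil_lt_add_one haR.le
  have hlt_iff : ∀ i : ℕ, i < N → (i : ℝ) < a * R ^ 2 := fun i hi => Nat.lt_ceil.mp hi
  clear_value N
  set f : ℕ → ℝ := fun p => if a * R ^ 2 ≤ (p : ℝ) then κ p * (2 * q) ^ p else 0 with hfdef
  clear_value f
  have hp1_of : ∀ p : ℕ, a * R ^ 2 ≤ (p : ℝ) → 1 ≤ p := by
    intro p hcond
    have : (0 : ℝ) < p := lt_of_lt_of_le haR hcond
    exact_mod_cast Nat.one_le_iff_ne_zero.mpr (by exact_mod_cast Nat.pos_iff_ne_zero.mp (by exact_mod_cast this))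
  have hf_nonneg : ∀ p, 0 ≤ f p := by
    intro p
    simp only [hfdef]
    split
    · next hcond =>
      exact mul_nonneg (hκpos p (hp1_of p hcond)).le (pow_nonneg (by linarith) _)
    · exact le_rfl
  have hf_le : ∀ p, f p ≤ K * (Real.sqrt p * q ^ p) := by
    intro p
    simp only [hfdef]
    split
    · next hcond =>
      calc κ p * (2 * q) ^ p = κ p * 2 ^ p * q ^ p := by rw [mul_pow]; ring
        _ ≤ K * Real.sqrt p * q ^ p :=
            mul_le_mul_of_nonneg_right (hKs p (hp1_of p hcond)) (pow_nonneg hq0 _)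
        _ = K * (Real.sqrt p * q ^ p) := by ring
    · positivity
  have hgsum : Summable (fun p : ℕ => Real.sqrt p * q ^ p) := aux_summable_sqrt q hq0 hq1
  have hfsum : Summable f := Summable.of_nonneg_of_le hf_nonneg hf_le (hgsum.mul_left K)
  have hhead : ∑ i ∈ Finset.range N, f i = 0 := by
    apply Finset.sum_eq_zero
    intro i hi
    have hlt : (i : ℝ) < a * R ^ 2 := hlt_iff i (Finset.mem_range.mp hi)
    simp only [hfdef]
    rw [if_neg (not_le.mpr hlt)]
  have hshift : ∑' p, f p = ∑' j, f (j + N) := by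
    have h := Summable.sum_add_tsum_nat_add (f := f) N hfsum
    rw [hhead, zero_add] at h
    exact h.symm
  have hshift_sum : Summable (fun j => f (j + N)) := (summable_nat_add_iff N).mpr hfsum
  have hsum_geo : Summable (fun j : ℕ => q ^ j) := summable_geometric_of_lt_one hq0 hq1
  have hsum_j : Summable (fun j : ℕ => (j : ℝ) * q ^ j) := by
    have := summable_pow_mul_geometric_of_norm_lt_one (R := ℝ) 1 (by
      rwa [Real.norm_eq_abs, abs_of_nonneg hq0])
    simpa using this
  have hterm2 : ∀ j : ℕ, f (j + N)
      ≤ K * q ^ N * (Real.sqrt N * q ^ j + Real.sqrt j * q ^ j) := by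
    intro j
    have hcond : a * R ^ 2 ≤ ((j + N : ℕ) : ℝ) := by
      push_cast
      have : (0:ℝ) ≤ (j : ℝ) := Nat.cast_nonneg j
      linarith
    simp only [hfdef]
    rw [if_pos hcond]
    have hjN1 : 1 ≤ j + N := le_trans hN1 (Nat.le_add_left N j)
    have hkb := hKs (j + N) hjN1
    have hsq : Real.sqrt ((j + N : ℕ) : ℝ) ≤ Real.sqrt j + Real.sqrt N := by
      push_cast
      exact aux_sqrt_add _ _ (Nat.cast_nonneg j) (Nat.cast_nonneg N)
    have hqpow : q ^ (j + N) = q ^ j * q ^ N := pow_add q j N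
    calc κ (j + N) * (2 * q) ^ (j + N) = κ (j + N) * 2 ^ (j + N) * q ^ (j + N) := by
          rw [mul_pow]; ring
      _ ≤ K * Real.sqrt ((j + N : ℕ) : ℝ) * q ^ (j + N) :=
          mul_le_mul_of_nonneg_right hkb (pow_nonneg hq0 _)
      _ ≤ K * (Real.sqrt j + Real.sqrt N) * (q ^ j * q ^ N) := by
          rw [← hqpow]
          exact mul_le_mul_of_nonneg_right (mul_le_mul_of_nonneg_left hsq hKpos.le)
            (pow_nonneg hq0 _)
      _ = K * q ^ N * (Real.sqrt N * q ^ j + Real.sqrt j * q ^ j) := by ring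
  have hmaj_sum : Summable (fun j : ℕ =>
      K * q ^ N * (Real.sqrt N * q ^ j + Real.sqrt j * q ^ j)) :=
    ((hsum_geo.mul_left _).add hgsum).mul_left _
  -- the sqrt-weighted geometric series bound
  have hS : ∑' j : ℕ, Real.sqrt j * q ^ j ≤ 6 * R ^ 3 := by
    have hterm3 : ∀ j : ℕ, Real.sqrt j * q ^ j
        ≤ 1 / (2 * R) * ((j : ℝ) * q ^ j) + R / 2 * q ^ j := by
      intro j
      have h1 := aux_sqrt_r j R (Nat.cast_nonneg j) hR0
      have h2 : Real.sqrt j * q ^ j ≤ ((j : ℝ) / R + R) / 2 * q ^ j :=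
        mul_le_mul_of_nonneg_right h1 (pow_nonneg hq0 _)
      calc Real.sqrt j * q ^ j ≤ ((j : ℝ) / R + R) / 2 * q ^ j := h2
        _ = 1 / (2 * R) * ((j : ℝ) * q ^ j) + R / 2 * q ^ j := by
            field_simp
    have h1 := Summable.tsum_le_tsum hterm3 hgsum ((hsum_j.mul_left _).add (hsum_geo.mul_left _))
    have h2 : ∑' j : ℕ, (1 / (2 * R) * ((j : ℝ) * q ^ j) + R / 2 * q ^ j)
        = 1 / (2 * R) * (q / (1 - q) ^ 2) + R / 2 * (1 - q)⁻¹ := by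
      rw [Summable.tsum_add (hsum_j.mul_left _) (hsum_geo.mul_left _), tsum_mul_left, tsum_mul_left,
        tsum_coe_mul_geometric_of_norm_lt_one (by rwa [Real.norm_eq_abs, abs_of_nonneg hq0]),
        tsum_geometric_of_lt_one hq0 hq1]
    rw [h2, ← hudef] at h1
    have hq_div : q / u ^ 2 ≤ 9 * R ^ 4 := by
      rw [div_le_iff₀ (by positivity)]
      have h5 : 1 * 1 ≤ u * (3 * R ^ 2) * (u * (3 * R ^ 2)) :=
        mul_le_mul h3Ru h3Ru (by norm_num) (by positivity)
      nlinarith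
    have heq6 : 1 / (2 * R) * (9 * R ^ 4) + R / 2 * (3 * R ^ 2) = 6 * R ^ 3 := by
      field_simp
      ring
    calc ∑' j : ℕ, Real.sqrt j * q ^ j
        ≤ 1 / (2 * R) * (q / u ^ 2) + R / 2 * u⁻¹ := h1
      _ ≤ 1 / (2 * R) * (9 * R ^ 4) + R / 2 * (3 * R ^ 2) := by
          gcongr
      _ = 6 * R ^ 3 := heq6
  have htail : ∑' p, f p ≤ K * q ^ N * (Real.sqrt N * u⁻¹ + 6 * R ^ 3) := by
    rw [hshift]
    calc ∑' j, f (j + N)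
        ≤ ∑' j : ℕ, K * q ^ N * (Real.sqrt N * q ^ j + Real.sqrt j * q ^ j) :=
          Summable.tsum_le_tsum hterm2 hshift_sum hmaj_sum
      _ = K * q ^ N * (Real.sqrt N * ∑' j : ℕ, q ^ j + ∑' j : ℕ, Real.sqrt j * q ^ j) := by
          rw [tsum_mul_left, Summable.tsum_add (hsum_geo.mul_left _) hgsum, tsum_mul_left]
      _ ≤ K * q ^ N * (Real.sqrt N * u⁻¹ + 6 * R ^ 3) := by
          rw [tsum_geometric_of_lt_one hq0 hq1, ← hudef]
          have hKq : 0 ≤ K * q ^ N := mul_nonneg hKpos.le (pow_nonneg hq0 _)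
          exact mul_le_mul_of_nonneg_left (by linarith [hS]) hKq
  have hsqrtN : Real.sqrt N ≤ Real.sqrt a * R + 1 := by
    calc Real.sqrt N ≤ Real.sqrt (a * R ^ 2 + 1) := Real.sqrt_le_sqrt hNlt.le
      _ ≤ Real.sqrt (a * R ^ 2) + Real.sqrt 1 :=
          aux_sqrt_add _ _ (by positivity) (by norm_num)
      _ = Real.sqrt a * R + 1 := by
          rw [Real.sqrt_one, Real.sqrt_mul ha.le, Real.sqrt_sq hR0.le]
  have hqN : q ^ N ≤ Real.exp (-(a / 3)) := by
    calc q ^ N ≤ (Real.exp (-(1 / (3 * R ^ 2)))) ^ N := pow_le_pow_left₀ hq0 hq_ub N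
      _ = Real.exp ((N : ℝ) * (-(1 / (3 * R ^ 2)))) := (Real.exp_nat_mul _ _).symm
      _ ≤ Real.exp (-(a / 3)) := by
          apply Real.exp_le_exp.mpr
          rw [mul_neg, neg_le_neg_iff]
          have heq : (N : ℝ) * (1 / (3 * R ^ 2)) = (N : ℝ) / (3 * R ^ 2) := by ring
          rw [heq, le_div_iff₀ (by positivity)]
          nlinarith
  have hsa : 0 ≤ Real.sqrt a := Real.sqrt_nonneg a
  have htail2 : ∑' p, f p
      ≤ K * Real.exp (-(a / 3)) * ((3 * Real.sqrt a + 9) * R ^ 3) := by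
    have hstep : Real.sqrt N * u⁻¹ + 6 * R ^ 3
        ≤ (Real.sqrt a * R + 1) * (3 * R ^ 2) + 6 * R ^ 3 := by
      have h1 : Real.sqrt N * u⁻¹ ≤ (Real.sqrt a * R + 1) * (3 * R ^ 2) :=
        mul_le_mul hsqrtN huinv (inv_nonneg.mpr hupos.le) (by positivity)
      linarith
    have hstep2 : (Real.sqrt a * R + 1) * (3 * R ^ 2) + 6 * R ^ 3
        ≤ (3 * Real.sqrt a + 9) * R ^ 3 := by nlinarith
    calc ∑' p, f p ≤ K * q ^ N * (Real.sqrt N * u⁻¹ + 6 * R ^ 3) := htail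
      _ ≤ K * Real.exp (-(a / 3)) * ((3 * Real.sqrt a + 9) * R ^ 3) := by
          apply mul_le_mul
          · exact mul_le_mul_of_nonneg_left hqN hKpos.le
          · exact le_trans hstep hstep2
          · have : 0 ≤ Real.sqrt N * u⁻¹ := mul_nonneg (Real.sqrt_nonneg _) (inv_nonneg.mpr hupos.le)
            positivity
          · positivity
  -- final assembly
  have hZpos : 0 < Z r := lt_of_lt_of_le (by positivity) hZlb
  have hdiv : (∑' p, f p) / Z r
      ≤ (K * Real.exp (-(a / 3)) * ((3 * Real.sqrt a + 9) * R ^ 3)) / (c * R ^ 3) :=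
    div_le_div₀ (by positivity) htail2 (by positivity) hZlb
  have heq2 : (K * Real.exp (-(a / 3)) * ((3 * Real.sqrt a + 9) * R ^ 3)) / (c * R ^ 3)
      = K / c * ((3 * Real.sqrt a + 9) * Real.exp (-(a / 3))) := by
    field_simp
  have hkey : 3 * Real.sqrt a + 9 ≤ 12 * Real.exp (a / 6) := by
    have h1 : Real.sqrt a ≤ (a + 1) / 2 := aux_sqrt_le a ha.le
    have h2 := Real.add_one_le_exp (a / 6)
    linarith
  have hfinal : K / c * ((3 * Real.sqrt a + 9) * Real.exp (-(a / 3)))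
      ≤ 12 * K / c * Real.exp (-(1 / 6) * a) := by
    have h3 : (3 * Real.sqrt a + 9) * Real.exp (-(a / 3))
        ≤ 12 * Real.exp (a / 6) * Real.exp (-(a / 3)) :=
      mul_le_mul_of_nonneg_right hkey (Real.exp_pos _).le
    have h4 : 12 * Real.exp (a / 6) * Real.exp (-(a / 3)) = 12 * Real.exp (-(1 / 6) * a) := by
      rw [mul_assoc, ← Real.exp_add]
      rw [show a / 6 + -(a / 3) = -(1 / 6) * a by ring]
    have hKc : 0 ≤ K / c := div_nonneg hKpos.le hc.le
    calc K / c * ((3 * Real.sqrt a + 9) * Real.exp (-(a / 3)))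
        ≤ K / c * (12 * Real.exp (-(1 / 6) * a)) := by
          apply mul_le_mul_of_nonneg_left _ hKc
          rw [← h4]; exact h3
      _ = 12 * K / c * Real.exp (-(1 / 6) * a) := by ring
  calc (∑' p, f p) / Z r
      ≤ (K * Real.exp (-(a / 3)) * ((3 * Real.sqrt a + 9) * R ^ 3)) / (c * R ^ 3) := hdiv
    _ = K / c * ((3 * Real.sqrt a + 9) * Real.exp (-(a / 3))) := heq2
    _ ≤ 12 * K / c * Real.exp (-(1 / 6) * a) := hfinal
end

section
/- Let (κ_p)_{p ≥ 1} be a sequence of positive reals such that κ_p·2^p/√p → (64√3)/(π√2) as p → ∞, and for every integer r ≥ 1 set π_r = 1 − 8/((3 + 2r)² − 1) and Z_r = ∑_{p=1}^∞ κ_p·(2π_r)^p (which is finite). Then there exists a constant M₂ > 0 such that for every real a > 0 and every integer r ≥ 1, (1/Z_r)·∑_{1 ≤ p ≤ a·r²} κ_p·(2π_r)^p ≤ M₂·a^{3/2}. -/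
private lemma exp_le_one_sub {x : ℝ} (h0 : 0 ≤ x) (h1 : x ≤ 1/3) :
    Real.exp (-(3/2*x)) ≤ 1 - x := by
  have hE : 0 < Real.exp (3/2*x) := Real.exp_pos _
  have key : 1 ≤ (1 - x) * Real.exp (3/2*x) := by
    nlinarith [Real.add_one_le_exp (3/2*x)]
  calc Real.exp (-(3/2*x)) = 1 / Real.exp (3/2*x) := by rw [Real.exp_neg, one_div]
    _ ≤ 1 - x := by rw [div_le_iff₀ hE]; linarith

private lemma sum_range_shift (f : ℕ → ℝ) (n : ℕ) :
    ∑ p ∈ Finset.range n, f (p + 1) = ∑ p ∈ Finset.Icc 1 n, f p := by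
  induction n with
  | zero => simp
  | succ n ih =>
      rw [Finset.sum_range_succ, ih, Finset.sum_Icc_succ_top (by omega)]

private lemma gauss_sum (n : ℕ) : ∑ p ∈ Finset.Icc 1 n, (p : ℝ) = n * (n + 1) / 2 := by
  induction n with
  | zero => simp
  | succ n ih =>
      rw [Finset.sum_Icc_succ_top (by omega), ih]
      push_cast; ring

set_option maxHeartbeats 1000000 in
/-- Lower tail estimate: `(1/Z_r)·∑_{1 ≤ p ≤ ar²} κ_p (2π_r)^p ≤ M₂ a^{3/2}` uniformly in
`r ≥ 1` and `a > 0`. -/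
theorem hull_perimeter_lower_tail (κ : ℕ → ℝ) (hκpos : ∀ p : ℕ, 1 ≤ p → 0 < κ p)
    (hκasymp : Filter.Tendsto (fun p : ℕ => κ p * 2 ^ p / Real.sqrt p) Filter.atTop
      (nhds (64 * Real.sqrt 3 / (Real.pi * Real.sqrt 2))))
    (piR : ℕ → ℝ) (hpi : ∀ r : ℕ, piR r = 1 - 8 / ((3 + 2 * (r : ℝ)) ^ 2 - 1))
    (Z : ℕ → ℝ) (hZ : ∀ r : ℕ, Z r = ∑' p : ℕ, κ (p + 1) * (2 * piR r) ^ (p + 1))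
    (hZfin : ∀ r : ℕ, 1 ≤ r → Summable (fun p : ℕ => κ (p + 1) * (2 * piR r) ^ (p + 1))) :
    ∃ M₂ : ℝ, 0 < M₂ ∧ ∀ a : ℝ, 0 < a → ∀ r : ℕ, 1 ≤ r →
      (∑ p ∈ Finset.Icc 1 ⌊a * (r : ℝ) ^ 2⌋₊, κ p * (2 * piR r) ^ p) / Z r
        ≤ M₂ * a ^ (3 / 2 : ℝ) := by
  set L : ℝ := 64 * Real.sqrt 3 / (Real.pi * Real.sqrt 2) with hLdef
  set f : ℕ → ℝ := fun p : ℕ => κ p * 2 ^ p / Real.sqrt p with hfdef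
  have hL : 0 < L := by
    apply div_pos
    · have := Real.sqrt_pos.mpr (by norm_num : (0:ℝ) < 3); positivity
    · have := Real.sqrt_pos.mpr (by norm_num : (0:ℝ) < 2)
      have := Real.pi_pos; positivity
  have hsqp : ∀ p : ℕ, 1 ≤ p → 0 < Real.sqrt p :=
    fun p hp => Real.sqrt_pos.mpr (by exact_mod_cast hp)
  have hfpos : ∀ p : ℕ, 1 ≤ p → 0 < f p := by
    intro p hp
    have h1 := hsqp p hp
    have h2 := hκpos p hp
    simp only [hfdef]
    positivity
  obtain ⟨N₀, hN₀⟩ := (Metric.tendsto_atTop.mp hκasymp) (L/2) (half_pos hL)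
  set N : ℕ := max N₀ 1 with hNdef
  have hNne : (Finset.Icc 1 N).Nonempty := ⟨1, by simp [hNdef]⟩
  set Cu : ℝ := max (3*L/2) ((Finset.Icc 1 N).sup' hNne f) with hCu
  set cl : ℝ := min (L/2) ((Finset.Icc 1 N).inf' hNne f) with hcl
  have hclpos : 0 < cl := by
    apply lt_min (half_pos hL)
    rw [Finset.lt_inf'_iff]
    intro p hp
    exact hfpos p (Finset.mem_Icc.mp hp).1
  have hCupos : 0 < Cu := lt_of_lt_of_le (by linarith) (le_max_left _ _)
  have hfu : ∀ p : ℕ, 1 ≤ p → f p ≤ Cu := by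
    intro p hp
    rcases le_or_gt p N with h | h
    · exact le_trans (Finset.le_sup' f (Finset.mem_Icc.mpr ⟨hp, h⟩)) (le_max_right _ _)
    · have hd := hN₀ p (le_trans (le_max_left _ _) h.le)
      rw [Real.dist_eq, abs_lt] at hd
      have : f p ≤ 3*L/2 := by linarith [hd.2]
      exact le_trans this (le_max_left _ _)
  have hfl : ∀ p : ℕ, 1 ≤ p → cl ≤ f p := by
    intro p hp
    rcases le_or_gt p N with h | h
    · exact le_trans (min_le_right _ _) (Finset.inf'_le f (Finset.mem_Icc.mpr ⟨hp, h⟩))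
    · have hd := hN₀ p (le_trans (le_max_left _ _) h.le)
      rw [Real.dist_eq, abs_lt] at hd
      have : L/2 ≤ f p := by linarith [hd.1]
      exact le_trans (min_le_left _ _) this
  have hκu : ∀ p : ℕ, 1 ≤ p → κ p * 2 ^ p ≤ Cu * Real.sqrt p := by
    intro p hp
    have h := hfu p hp
    simp only [hfdef] at h
    rw [div_le_iff₀ (hsqp p hp)] at h
    linarith
  have hκl : ∀ p : ℕ, 1 ≤ p → cl * Real.sqrt p ≤ κ p * 2 ^ p := by
    intro p hp
    have h := hfl p hp
    simp only [hfdef] at h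
    rw [le_div_iff₀ (hsqp p hp)] at h
    linarith
  -- piR structure
  have hpi' : ∀ r : ℕ, 1 ≤ r → piR r = 1 - 2 / (((r:ℝ)+1) * ((r:ℝ)+2)) := by
    intro r hr
    rw [hpi r]
    have h2 : ((r:ℝ)+1) * ((r:ℝ)+2) ≠ 0 := by positivity
    have h1 : ((3 + 2*(r:ℝ))^2 - 1) = 4 * (((r:ℝ)+1) * ((r:ℝ)+2)) := by ring
    rw [h1]
    congr 1
    rw [div_eq_div_iff (by positivity) h2]
    ring
  have hxle : ∀ r : ℕ, 1 ≤ r → 2 / (((r:ℝ)+1) * ((r:ℝ)+2)) ≤ 1/3 := by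
    intro r hr
    have hr' : (1:ℝ) ≤ r := by exact_mod_cast hr
    rw [div_le_div_iff₀ (by positivity) (by norm_num)]
    nlinarith
  have hxpos : ∀ r : ℕ, (0:ℝ) ≤ 2 / (((r:ℝ)+1) * ((r:ℝ)+2)) := by
    intro r; positivity
  have hπpos : ∀ r : ℕ, 1 ≤ r → 0 < piR r := by
    intro r hr
    rw [hpi' r hr]
    linarith [hxle r hr]
  have hπle1 : ∀ r : ℕ, 1 ≤ r → piR r ≤ 1 := by
    intro r hr
    rw [hpi' r hr]
    linarith [hxpos r]
  have hπpow : ∀ r : ℕ, 1 ≤ r → Real.exp (-3) ≤ piR r ^ (r^2) := by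
    intro r hr
    have hrR : (1:ℝ) ≤ (r:ℝ) := by exact_mod_cast hr
    set x : ℝ := 2 / (((r:ℝ)+1) * ((r:ℝ)+2)) with hxdef
    have hx0 : 0 ≤ x := hxpos r
    have hx3 : x ≤ 1/3 := hxle r hr
    have h1 : Real.exp (-(3/2*x)) ≤ piR r := by
      rw [hpi' r hr]; exact exp_le_one_sub hx0 hx3
    have h2 : Real.exp (-(3/2*x)) ^ (r^2) ≤ piR r ^ (r^2) :=
      pow_le_pow_left₀ (Real.exp_pos _).le h1 _
    refine le_trans ?_ h2
    rw [← Real.exp_nat_mul]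
    apply Real.exp_le_exp.mpr
    have hxr : ((r:ℝ))^2 * x ≤ 2 := by
      have hden : (0:ℝ) < ((r:ℝ)+1)*((r:ℝ)+2) := by positivity
      rw [hxdef, ← mul_div_assoc, div_le_iff₀ hden]
      nlinarith
    have hcast : ((r^2 : ℕ) : ℝ) = ((r:ℝ))^2 := by push_cast; ring
    rw [hcast]
    nlinarith
  have hterm_nonneg : ∀ r : ℕ, 1 ≤ r → ∀ p : ℕ, 1 ≤ p → 0 ≤ κ p * (2 * piR r) ^ p := by
    intro r hr p hp
    have h1 := hπpos r hr
    have h2 := hκpos p hp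
    positivity
  have hsqrt_sum_lb : ∀ n : ℕ, 1 ≤ n →
      (n:ℝ) * Real.sqrt n / 2 ≤ ∑ p ∈ Finset.Icc 1 n, Real.sqrt p := by
    intro n hn
    have hsn : 0 < Real.sqrt n := hsqp n hn
    have step : ∀ p ∈ Finset.Icc 1 n, (p:ℝ) / Real.sqrt n ≤ Real.sqrt p := by
      intro p hp
      obtain ⟨hp1, hpn⟩ := Finset.mem_Icc.mp hp
      rw [div_le_iff₀ hsn]
      have h1 : Real.sqrt p * Real.sqrt p = (p:ℝ) := Real.mul_self_sqrt (by positivity)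
      have h2 : Real.sqrt p ≤ Real.sqrt n := Real.sqrt_le_sqrt (by exact_mod_cast hpn)
      nlinarith [(hsqp p hp1).le]
    calc (n:ℝ) * Real.sqrt n / 2 ≤ ((n:ℝ) * ((n:ℝ)+1) / 2) / Real.sqrt n := by
          rw [le_div_iff₀ hsn]
          have h1 : Real.sqrt n * Real.sqrt n = (n:ℝ) := Real.mul_self_sqrt (by positivity)
          nlinarith [hsn.le, (by exact_mod_cast hn : (1:ℝ) ≤ (n:ℝ))]
      _ = ∑ p ∈ Finset.Icc 1 n, (p:ℝ) / Real.sqrt n := by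
          rw [← Finset.sum_div, gauss_sum]
      _ ≤ ∑ p ∈ Finset.Icc 1 n, Real.sqrt p := Finset.sum_le_sum step
  have hZlb : ∀ r : ℕ, 1 ≤ r → cl * Real.exp (-3) / 2 * (r:ℝ)^3 ≤ Z r := by
    intro r hr
    have hrR : (1:ℝ) ≤ (r:ℝ) := by exact_mod_cast hr
    set n : ℕ := r^2 with hndef
    have hn1 : 1 ≤ n := by
      show 1 ≤ r^2
      exact Nat.one_le_pow _ _ (by omega)
    have hpsum : ∑ p ∈ Finset.Icc 1 n, κ p * (2 * piR r) ^ p ≤ Z r := by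
      rw [hZ r, ← sum_range_shift (fun p => κ p * (2 * piR r) ^ p) n]
      exact Summable.sum_le_tsum _ (fun i _ => hterm_nonneg r hr (i+1) (by omega)) (hZfin r hr)
    refine le_trans ?_ hpsum
    have hterm_lb : ∀ p ∈ Finset.Icc 1 n,
        cl * Real.exp (-3) * Real.sqrt p ≤ κ p * (2 * piR r) ^ p := by
      intro p hp
      obtain ⟨hp1, hpn⟩ := Finset.mem_Icc.mp hp
      have hπ : Real.exp (-3) ≤ piR r ^ p := by
        refine le_trans (hπpow r hr) ?_
        exact pow_le_pow_of_le_one (hπpos r hr).le (hπle1 r hr) hpn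
      have h2p : κ p * (2 * piR r) ^ p = (κ p * 2 ^ p) * piR r ^ p := by
        rw [mul_pow]; ring
      rw [h2p]
      have h1 := hκl p hp1
      have h3 : cl * Real.sqrt p * Real.exp (-3) ≤ (κ p * 2 ^ p) * piR r ^ p := by
        apply mul_le_mul h1 hπ (Real.exp_pos _).le
        nlinarith [hκl p hp1, hclpos, (hsqp p hp1).le]
      nlinarith [h3]
    calc cl * Real.exp (-3) / 2 * (r:ℝ)^3
        = cl * Real.exp (-3) * ((n:ℝ) * Real.sqrt n / 2) := by
          have h1 : (n:ℝ) = (r:ℝ)^2 := by simp only [hndef]; push_cast; ring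
          have h2 : Real.sqrt n = (r:ℝ) := by
            rw [h1, Real.sqrt_sq (by positivity)]
          rw [h2, h1]; ring
      _ ≤ cl * Real.exp (-3) * ∑ p ∈ Finset.Icc 1 n, Real.sqrt p := by
          apply mul_le_mul_of_nonneg_left (hsqrt_sum_lb n hn1)
          have := Real.exp_pos (-3:ℝ); positivity
      _ = ∑ p ∈ Finset.Icc 1 n, cl * Real.exp (-3) * Real.sqrt p := by
          rw [Finset.mul_sum]
      _ ≤ ∑ p ∈ Finset.Icc 1 n, κ p * (2 * piR r) ^ p := Finset.sum_le_sum hterm_lb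
  set c₂ : ℝ := cl * Real.exp (-3) / 2 with hc₂
  have hc₂pos : 0 < c₂ := by
    have := Real.exp_pos (-3:ℝ)
    simp only [hc₂]; positivity
  refine ⟨Cu / c₂, div_pos hCupos hc₂pos, ?_⟩
  intro a ha r hr
  have hrR : (1:ℝ) ≤ (r:ℝ) := by exact_mod_cast hr
  have hZpos : 0 < Z r := lt_of_lt_of_le (by positivity) (hZlb r hr)
  rw [div_le_iff₀ hZpos]
  set m : ℕ := ⌊a * (r:ℝ)^2⌋₊ with hmdef
  have hnum : ∑ p ∈ Finset.Icc 1 m, κ p * (2 * piR r) ^ p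
      ≤ Cu * (a * Real.sqrt a * (r:ℝ)^3) := by
    have hterm_ub : ∀ p ∈ Finset.Icc 1 m, κ p * (2 * piR r) ^ p ≤ Cu * Real.sqrt p := by
      intro p hp
      obtain ⟨hp1, -⟩ := Finset.mem_Icc.mp hp
      have h2p : κ p * (2 * piR r) ^ p = (κ p * 2 ^ p) * piR r ^ p := by
        rw [mul_pow]; ring
      rw [h2p]
      have hπp : piR r ^ p ≤ 1 := pow_le_one₀ (hπpos r hr).le (hπle1 r hr)
      have hκ2 : 0 ≤ κ p * 2 ^ p := by
        have := (hκpos p hp1).le; positivity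
      calc (κ p * 2 ^ p) * piR r ^ p ≤ (κ p * 2 ^ p) * 1 :=
            mul_le_mul_of_nonneg_left hπp hκ2
        _ = κ p * 2 ^ p := by ring
        _ ≤ Cu * Real.sqrt p := hκu p hp1
    have hmle : (m:ℝ) ≤ a * (r:ℝ)^2 := Nat.floor_le (by positivity)
    have hsm : Real.sqrt m ≤ Real.sqrt a * (r:ℝ) := by
      calc Real.sqrt m ≤ Real.sqrt (a * (r:ℝ)^2) := Real.sqrt_le_sqrt hmle
        _ = Real.sqrt a * (r:ℝ) := by
            rw [Real.sqrt_mul ha.le, Real.sqrt_sq (by positivity)]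
    calc ∑ p ∈ Finset.Icc 1 m, κ p * (2 * piR r) ^ p
        ≤ ∑ p ∈ Finset.Icc 1 m, Cu * Real.sqrt p := Finset.sum_le_sum hterm_ub
      _ ≤ ∑ p ∈ Finset.Icc 1 m, Cu * Real.sqrt m := by
          apply Finset.sum_le_sum
          intro p hp
          exact mul_le_mul_of_nonneg_left
            (Real.sqrt_le_sqrt (by exact_mod_cast (Finset.mem_Icc.mp hp).2)) hCupos.le
      _ = (m:ℝ) * (Cu * Real.sqrt m) := by
          rw [Finset.sum_const, Nat.card_Icc, nsmul_eq_mul]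
          simp
      _ = Cu * ((m:ℝ) * Real.sqrt m) := by ring
      _ ≤ Cu * ((a * (r:ℝ)^2) * (Real.sqrt a * (r:ℝ))) := by
          have hsm0 : (0:ℝ) ≤ Real.sqrt m := Real.sqrt_nonneg _
          exact mul_le_mul_of_nonneg_left
            (mul_le_mul hmle hsm hsm0 (by positivity)) hCupos.le
      _ = Cu * (a * Real.sqrt a * (r:ℝ)^3) := by ring
  have hra : a ^ (3/2:ℝ) = a * Real.sqrt a := by
    rw [show (3/2:ℝ) = 1 + 1/2 by norm_num, Real.rpow_add ha, Real.rpow_one,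
      ← Real.sqrt_eq_rpow]
  calc ∑ p ∈ Finset.Icc 1 m, κ p * (2 * piR r) ^ p
      ≤ Cu * (a * Real.sqrt a * (r:ℝ)^3) := hnum
    _ = (Cu / c₂ * (a * Real.sqrt a)) * (c₂ * (r:ℝ)^3) := by
        field_simp
    _ ≤ (Cu / c₂ * (a * Real.sqrt a)) * Z r := by
        apply mul_le_mul_of_nonneg_left (hZlb r hr)
        have hsa0 : (0:ℝ) ≤ Real.sqrt a := Real.sqrt_nonneg _
        positivity
    _ = Cu / c₂ * a ^ (3/2:ℝ) * Z r := by rw [hra]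
end
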